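/- arXiv:1406.3224 — 4 statements merged into one kernel-verified Lean document; each statement's English description precedes it below -/
import Mathlib

section
/- (Relaxed ISS small-gain theorem, summation form.) Suppose G is globally K-bounded and the system is the interconnection of N subsystems. Let M ∈ ℕ, M ≥ 1; for i,j ∈ {1,…,N} let γᵢⱼ be of class K∞ or identically zero and γᵢᵤ of class K or identically zero; let δᵢ₁, δᵢ₂ be of class K∞; and let each Vᵢ : ℝ^{nᵢ} → [0,∞) be proper and positive definite. Assume: (1) for every i, every ξ = (ξ₁,…,ξ_N) ∈ ℝⁿ and every bounded input u, Vᵢ(xᵢ(M,ξ,u)) ≤ max_{j} γᵢⱼ(Vⱼ(ξⱼ)) + γᵢᵤ(‖u‖∞); (2) there exist σ̃₁,…,σ̃_N of class K∞ (an Ω-path for D₁ ∘ Γ⊕ ∘ D₂) such that (id + δᵢ₁)( max_{j} γᵢⱼ((id + δⱼ₂)(σ̃ⱼ(r))) ) < σ̃ᵢ(r) for every i and every r > 0; (3) for every i there exists α̂ᵢ of class K∞ with σ̃ᵢ⁻¹((id + δᵢ₂)⁻¹(σ̃ᵢ(s))) = s − α̂ᵢ(s) for all s ≥ 0. Then V(ξ)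 := max_{i} σ̃ᵢ⁻¹((id + δᵢ₂)⁻¹(Vᵢ(ξᵢ))) is a dissipative finite-step ISS Lyapunov function for the overall system (with the same M), and in particular the overall system is ISS. -/
open scoped NNReal

/-- A function `α : ℝ≥0 → ℝ≥0` is of class K if it is continuous, strictly
increasing and vanishes at 0. -/
def ClassK (α : ℝ≥0 → ℝ≥0) : Prop :=
  Continuous α ∧ StrictMono α ∧ α 0 = 0

/-- Class K∞: class K and unbounded. -/
def ClassKInf (α : ℝ≥0 → ℝ≥0) : Prop :=
  ClassK α ∧ Filter.Tendsto α Filter.atTop Filter.atTop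

/-- Class KL functions. -/
def ClassKL (β : ℝ≥0 → ℝ≥0 → ℝ≥0) : Prop :=
  (∀ t, ClassK fun s => β s t) ∧
  ∀ s, 0 < s → Continuous (β s) ∧ StrictAnti (β s) ∧
    Filter.Tendsto (β s) Filter.atTop (nhds 0)

/-- Positive definite function on [0,∞). -/
def PosDefFun (ρ : ℝ≥0 → ℝ≥0) : Prop :=
  Continuous ρ ∧ ρ 0 = 0 ∧ ∀ s, 0 < s → 0 < ρ s

variable {E F : Type*} [NormedAddCommGroup E] [NormedAddCommGroup F]

/-- Solution map of the discrete-time system x(k+1) = G(x(k),u(k)). -/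
def sol (G : E → F → E) (ξ : E) (u : ℕ → F) : ℕ → E
  | 0 => ξ
  | k + 1 => G (sol G ξ u k) (u k)

/-- A bounded input. -/
def BddInput (u : ℕ → F) : Prop := BddAbove (Set.range fun k => ‖u k‖₊)

/-- The sup-norm ‖u‖∞ of an input. -/
noncomputable def supNorm (u : ℕ → F) : ℝ≥0 := ⨆ k, ‖u k‖₊

/-- Global K-boundedness of the dynamics. -/
def GloballyKBounded (G : E → F → E) : Prop :=
  ∃ ω₁ ω₂ : ℝ≥0 → ℝ≥0, ClassK ω₁ ∧ ClassK ω₂ ∧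
    ∀ ξ μ, ‖G ξ μ‖₊ ≤ ω₁ ‖ξ‖₊ + ω₂ ‖μ‖₊

/-- Proper and positive definite function. -/
def ProperPosDef (V : E → ℝ≥0) : Prop :=
  ∃ α₁ α₂ : ℝ≥0 → ℝ≥0, ClassKInf α₁ ∧ ClassKInf α₂ ∧
    ∀ ξ, α₁ ‖ξ‖₊ ≤ V ξ ∧ V ξ ≤ α₂ ‖ξ‖₊

/-- Dissipative finite-step ISS Lyapunov function with a prescribed step M. -/
def DissFinStepLyapAt (G : E → F → E) (V : E → ℝ≥0) (M : ℕ) : Prop :=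
  ProperPosDef V ∧ 1 ≤ M ∧
  ∃ σ ρ : ℝ≥0 → ℝ≥0, ClassK σ ∧ PosDefFun ρ ∧ ClassKInf (fun s => s - ρ s) ∧
    ∀ ξ u, BddInput u → V (sol G ξ u M) ≤ ρ (V ξ) + σ (supNorm u)

/-- Dissipative finite-step ISS Lyapunov function. -/
def DissFinStepLyap (G : E → F → E) (V : E → ℝ≥0) : Prop :=
  ∃ M, DissFinStepLyapAt G V M

/-- Input-to-state stability. -/
def ISS (G : E → F → E) : Prop :=
  ∃ β γ, ClassKL β ∧ ClassK γ ∧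
    ∀ ξ u, BddInput u → ∀ k : ℕ, ‖sol G ξ u k‖₊ ≤ β ‖ξ‖₊ k + γ (supNorm u)

/-- Exponential input-to-state stability. -/
def ExpISS (G : E → F → E) : Prop :=
  ∃ (C κ : ℝ≥0) (γ : ℝ≥0 → ℝ≥0), 1 ≤ C ∧ κ < 1 ∧ ClassK γ ∧
    ∀ ξ u, BddInput u → ∀ k : ℕ, ‖sol G ξ u k‖₊ ≤ C * κ ^ k * ‖ξ‖₊ + γ (supNorm u)



open scoped NNReal
open Filter

-- toolbox
namespace SGaux

variable {φ ψ : ℝ≥0 → ℝ≥0}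

theorem classK_mono (h : ClassK φ) : Monotone φ := h.2.1.monotone

theorem classK_comp (hφ : ClassK φ) (hψ : ClassK ψ) : ClassK (fun s => φ (ψ s)) :=
  ⟨hφ.1.comp hψ.1, hφ.2.1.comp hψ.2.1, by show φ (ψ 0) = 0; rw [hψ.2.2, hφ.2.2]⟩

theorem classKInf_comp (hφ : ClassKInf φ) (hψ : ClassKInf ψ) :
    ClassKInf (fun s => φ (ψ s)) :=
  ⟨classK_comp hφ.1 hψ.1, hφ.2.comp hψ.2⟩

theorem classKInf_surj (h : ClassKInf φ) : Function.Surjective φ := by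
  intro y
  obtain ⟨b, hb⟩ := (Filter.tendsto_atTop.mp h.2 y).exists
  have hmem : y ∈ Set.Icc (φ 0) (φ b) := ⟨by rw [h.1.2.2]; exact (zero_le : 0 ≤ y), hb⟩
  obtain ⟨x, _, hx⟩ := intermediate_value_Icc ((zero_le : 0 ≤ b)) h.1.1.continuousOn hmem
  exact ⟨x, hx⟩

theorem inv_classKInf (hφ : ClassKInf φ) (hL : Function.LeftInverse ψ φ)
    (hR : Function.RightInverse ψ φ) : ClassKInf ψ := by
  have hsurj : Function.Surjective φ := hR.surjective
  let e := StrictMono.orderIsoOfSurjective φ hφ.1.2.1 hsurj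
  have hψe : ψ = ⇑e.symm := by
    funext y
    have : y = φ (e.symm y) := (StrictMono.orderIsoOfSurjective_self_symm_apply _ _ _ _).symm
    calc ψ y = ψ (φ (e.symm y)) := by rw [← this]
    _ = e.symm y := hL _
  rw [hψe]
  refine ⟨⟨?_, e.symm.strictMono, ?_⟩, ?_⟩
  · exact OrderIso.continuous _
  · have h0 : ψ 0 = 0 := by have := hL 0; rwa [hφ.1.2.2] at this
    rw [← hψe]; exact h0
  · refine Filter.tendsto_atTop_atTop_of_monotone e.symm.monotone (fun b => ⟨φ b, ?_⟩)
    rw [← hψe, hL b]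

theorem exists_inv (h : ClassKInf φ) :
    ∃ ψ, ClassKInf ψ ∧ Function.LeftInverse ψ φ ∧ Function.RightInverse ψ φ := by
  have hsurj := classKInf_surj h
  let e := StrictMono.orderIsoOfSurjective φ h.1.2.1 hsurj
  have hL : Function.LeftInverse (⇑e.symm) φ := fun x =>
    StrictMono.orderIsoOfSurjective_symm_apply_self _ _ _ _
  have hR : Function.RightInverse (⇑e.symm) φ := fun x =>
    StrictMono.orderIsoOfSurjective_self_symm_apply _ _ _ _
  exact ⟨⇑e.symm, inv_classKInf h hL hR, hL, hR⟩

end SGaux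
namespace SGaux

variable {ι : Type*}

theorem continuous_finset_sup (s : Finset ι) (f : ι → ℝ≥0 → ℝ≥0)
    (hf : ∀ i ∈ s, Continuous (f i)) :
    Continuous fun x => s.sup (fun i => f i x) := by
  classical
  induction s using Finset.induction with
  | empty => simpa using continuous_const
  | insert a t hnot ih =>
    simp only [Finset.sup_insert]
    exact (hf a (Finset.mem_insert_self a t)).max
      (ih fun i hi => hf i (Finset.mem_insert_of_mem hi))

theorem continuous_finset_inf' (s : Finset ι) (hs : s.Nonempty) (f : ι → ℝ≥0 → ℝ≥0)
    (hf : ∀ i ∈ s, Continuous (f i)) :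
    Continuous fun x => s.inf' hs (fun i => f i x) := by
  classical
  revert hf
  induction hs using Finset.Nonempty.cons_induction with
  | singleton a =>
    intro hf
    have ha := hf a (Finset.mem_singleton_self a)
    convert ha using 1; funext x; simp
  | cons a t hat ht ih =>
    intro hf
    have hc : Continuous fun x => (f a x) ⊓ (t.inf' ht fun i => f i x) :=
      (hf a (Finset.mem_cons_self a t)).min
        (ih fun i hi => hf i (Finset.mem_cons_of_mem hi))
    convert hc using 1
    funext x
    exact Finset.inf'_cons (f := fun i => f i x) (H := ht)

theorem strictMono_finset_sup (s : Finset ι) (hs : s.Nonempty) (f : ι → ℝ≥0 → ℝ≥0)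
    (hf : ∀ i ∈ s, StrictMono (f i)) (hf0 : ∀ i ∈ s, f i 0 = 0) :
    StrictMono fun x => s.sup (fun i => f i x) := by
  intro x y hxy
  obtain ⟨i0, hi0⟩ := hs
  have hy0 : 0 < y := lt_of_le_of_lt ((zero_le : 0 ≤ x)) hxy
  have hpos : (⊥ : ℝ≥0) < s.sup (fun i => f i y) := by
    refine lt_of_lt_of_le ?_ (Finset.le_sup hi0)
    have := (hf i0 hi0) hy0
    rw [hf0 i0 hi0] at this; exact this
  refine (Finset.sup_lt_iff hpos).2 fun i hi => lt_of_lt_of_le ((hf i hi) hxy) (Finset.le_sup (f := fun j => f j y) hi)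

theorem classKInf_finset_sup (s : Finset ι) (hs : s.Nonempty) (f : ι → ℝ≥0 → ℝ≥0)
    (hf : ∀ i ∈ s, ClassKInf (f i)) :
    ClassKInf fun x => s.sup (fun i => f i x) := by
  obtain ⟨i0, hi0⟩ := hs
  refine ⟨⟨continuous_finset_sup s f fun i hi => (hf i hi).1.1,
    strictMono_finset_sup s ⟨i0, hi0⟩ f (fun i hi => (hf i hi).1.2.1)
      (fun i hi => (hf i hi).1.2.2), ?_⟩, ?_⟩
  · refine le_antisymm (Finset.sup_le fun i hi => le_of_eq (hf i hi).1.2.2) (zero_le)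
  · exact tendsto_atTop_mono (fun x => Finset.le_sup hi0) (hf i0 hi0).2

theorem classKInf_finset_inf' (s : Finset ι) (hs : s.Nonempty) (f : ι → ℝ≥0 → ℝ≥0)
    (hf : ∀ i ∈ s, ClassKInf (f i)) :
    ClassKInf fun x => s.inf' hs (fun i => f i x) := by
  refine ⟨⟨continuous_finset_inf' s hs f fun i hi => (hf i hi).1.1, ?_, ?_⟩, ?_⟩
  · intro x y hxy
    refine (Finset.lt_inf'_iff hs).2 fun i hi =>
      lt_of_le_of_lt (Finset.inf'_le _ hi) ((hf i hi).1.2.1 hxy)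
  · refine le_antisymm ?_ (zero_le)
    obtain ⟨i0, hi0⟩ := hs
    exact le_trans (Finset.inf'_le _ hi0) (le_of_eq (hf i0 hi0).1.2.2)
  · rw [Filter.tendsto_atTop]
    intro b
    have : ∀ i ∈ s, ∀ᶠ x : ℝ≥0 in Filter.atTop, b ≤ f i x := fun i hi =>
      Filter.tendsto_atTop.1 (hf i hi).2 b
    filter_upwards [(Finset.eventually_all s).2 this] with x hx
    exact (Finset.le_inf'_iff hs _).2 hx

theorem mono_two_bound {ω : ℝ≥0 → ℝ≥0} (hω : Monotone ω) (a b : ℝ≥0) :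
    ω (a + b) ≤ ω (2 * a) + ω (2 * b) := by
  have h : a + b ≤ max (2 * a) (2 * b) := by
    rcases le_total a b with h | h
    · refine le_trans ?_ (le_max_right _ _); rw [two_mul]; exact add_le_add_left h b
    · refine le_trans ?_ (le_max_left _ _); rw [two_mul]; exact add_le_add_right h a
  calc ω (a + b) ≤ ω (max (2 * a) (2 * b)) := hω h
  _ = max (ω (2 * a)) (ω (2 * b)) := hω.map_max
  _ ≤ _ := max_le (le_add_right le_rfl) (le_add_left le_rfl)

end SGaux
namespace SGaux

theorem sol_add {E F : Type*} [NormedAddCommGroup E] [NormedAddCommGroup F]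
    (G : E → F → E) (ξ : E) (u : ℕ → F) (a b : ℕ) :
    sol G ξ u (a + b) = sol G (sol G ξ u a) (fun k => u (a + k)) b := by
  induction b with
  | zero => rfl
  | succ b ih =>
    show G (sol G ξ u (a + b)) (u (a + b)) = _
    rw [ih]; rfl

theorem le_supNorm {F : Type*} [NormedAddCommGroup F] {u : ℕ → F} (hu : BddInput u) (k : ℕ) :
    ‖u k‖₊ ≤ supNorm u := le_ciSup hu k

theorem bddInput_shift {F : Type*} [NormedAddCommGroup F] {u : ℕ → F} (hu : BddInput u)
    (a : ℕ) : BddInput (fun k => u (a + k)) := by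
  obtain ⟨C, hC⟩ := hu
  refine ⟨C, ?_⟩
  rintro x ⟨k, rfl⟩
  exact hC (Set.mem_range_self (a + k))

theorem supNorm_shift_le {F : Type*} [NormedAddCommGroup F] {u : ℕ → F} (hu : BddInput u)
    (a : ℕ) : supNorm (fun k => u (a + k)) ≤ supNorm u :=
  ciSup_le fun k => le_supNorm hu (a + k)

/-! ### Piecewise-linear interpolation of a non-increasing null sequence -/

open Filter

noncomputable def dseq (c : ℕ → ℝ≥0) (q : ℕ) : ℝ≥0 := c q - c (q + 1)

noncomputable def interp (c : ℕ → ℝ≥0) (τ : ℝ≥0) : ℝ≥0 :=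
  ∑' q, dseq c q * (((q : ℝ≥0) + 1 - τ) ⊓ 1)

variable {c : ℕ → ℝ≥0}

theorem dseq_partial (hc : ∀ q, c (q + 1) ≤ c q) (n m : ℕ) :
    ∑ i ∈ Finset.range m, dseq c (n + i) = c n - c (n + m) := by
  have hmono : Antitone c := antitone_nat_of_succ_le hc
  induction m with
  | zero => simp
  | succ m ih =>
    rw [Finset.sum_range_succ, ih]
    exact tsub_add_tsub_cancel (hmono (Nat.le_add_right n m)) (hc (n + m))

theorem dseq_summable (hc : ∀ q, c (q + 1) ≤ c q) : Summable (dseq c) := by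
  rw [← NNReal.summable_coe]
  apply summable_of_sum_range_le (c := (c 0 : ℝ)) (fun n => (dseq c n).coe_nonneg)
  intro n
  have h := dseq_partial hc 0 n
  simp only [Nat.zero_add] at h
  rw [← NNReal.coe_sum, h]
  exact_mod_cast (tsub_le_self : c 0 - c n ≤ c 0)

theorem interp_term_summable (hc : ∀ q, c (q + 1) ≤ c q) (τ : ℝ≥0) :
    Summable (fun q => dseq c q * (((q : ℝ≥0) + 1 - τ) ⊓ 1)) :=
  NNReal.summable_of_le
    (fun q => le_trans (mul_le_mul_right (min_le_right _ _) _) (le_of_eq (mul_one _)))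
    (dseq_summable hc)

theorem interp_eq (hc : ∀ q, c (q + 1) ≤ c q) (hc0 : Tendsto c atTop (nhds 0))
    (n : ℕ) (τ : ℝ≥0) (h1 : (n : ℝ≥0) ≤ τ) (h2 : τ < (n : ℝ≥0) + 1) :
    interp c τ = dseq c n * (((n : ℝ≥0) + 1 - τ) ⊓ 1) + c (n + 1) := by
  set w : ℕ → ℝ≥0 := fun i => ((i : ℝ≥0) + 1 - τ) ⊓ 1 with hw
  refine HasSum.tsum_eq ?_
  rw [NNReal.hasSum_iff_tendsto_nat]
  have hev : ∀ m, n + 1 ≤ m →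
      ∑ i ∈ Finset.range m, dseq c i * w i = dseq c n * w n + (c (n + 1) - c m) := by
    intro m hm
    have hzero : ∀ i, i < n → dseq c i * w i = 0 := by
      intro i hi
      have : ((i : ℝ≥0) + 1) ≤ τ := by
        refine le_trans ?_ h1
        exact_mod_cast Nat.succ_le_of_lt hi
      have hwz : w i = 0 := by
        simp only [hw]
        rw [tsub_eq_zero_of_le this]
        exact min_eq_left (zero_le)
      rw [hwz, mul_zero]
    have hone : ∀ i, n + 1 ≤ i → w i = 1 := by
      intro i hi
      have hτi : τ ≤ (i : ℝ≥0) := by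
        refine le_trans (le_of_lt h2) ?_
        exact_mod_cast hi
      have : (1 : ℝ≥0) ≤ (i : ℝ≥0) + 1 - τ := by
        refine le_tsub_of_add_le_right ?_
        rw [add_comm]
        exact add_le_add_left hτi 1
      simp only [hw]
      exact min_eq_right this
    have hsplit : ∑ i ∈ Finset.range m, dseq c i * w i =
        ∑ i ∈ Finset.range (n + 1), dseq c i * w i +
          ∑ i ∈ Finset.Ico (n + 1) m, dseq c i * w i := by
      rw [Finset.range_eq_Ico, Finset.range_eq_Ico]
      exact (Finset.sum_Ico_consecutive _ (Nat.zero_le _) hm).symm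
    have hfirst : ∑ i ∈ Finset.range (n + 1), dseq c i * w i = dseq c n * w n := by
      rw [Finset.sum_range_succ, Finset.sum_eq_zero (fun i hi => hzero i (Finset.mem_range.1 hi)),
        zero_add]
    have hsecond : ∑ i ∈ Finset.Ico (n + 1) m, dseq c i * w i = c (n + 1) - c m := by
      rw [Finset.sum_congr rfl (fun i hi => by
        rw [hone i (Finset.mem_Ico.1 hi).1, mul_one])]
      rw [Finset.sum_Ico_eq_sum_range]
      have := dseq_partial hc (n + 1) (m - (n + 1))
      rw [this, Nat.add_sub_cancel' hm]
    rw [hsplit, hfirst, hsecond]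
  have hlim : Tendsto (fun m => dseq c n * w n + (c (n + 1) - c m)) atTop
      (nhds (dseq c n * w n + (c (n + 1) - 0))) :=
    tendsto_const_nhds.add (tendsto_const_nhds.sub hc0)
  rw [tsub_zero] at hlim
  have heq : (fun m => ∑ i ∈ Finset.range m, dseq c i * w i) =ᶠ[atTop]
      (fun m => dseq c n * w n + (c (n + 1) - c m)) :=
    Filter.eventually_atTop.2 ⟨n + 1, hev⟩
  exact Tendsto.congr' heq.symm hlim

theorem interp_nat (hc : ∀ q, c (q + 1) ≤ c q) (hc0 : Filter.Tendsto c Filter.atTop (nhds 0))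
    (n : ℕ) : interp c (n : ℝ≥0) = c n := by
  rw [interp_eq hc hc0 n n le_rfl (lt_add_of_pos_right _ one_pos)]
  have hw : (((n : ℝ≥0) + 1 - (n : ℝ≥0)) ⊓ 1) = 1 := by
    rw [add_comm, add_tsub_cancel_right, min_self]
  rw [hw, mul_one]
  exact tsub_add_cancel_of_le (hc n)

theorem interp_anti (hc : ∀ q, c (q + 1) ≤ c q) : Antitone (interp c) := by
  intro τ1 τ2 h
  exact Summable.tsum_le_tsum
    (fun q => mul_le_mul_right (min_le_min (tsub_le_tsub_left h _) le_rfl) _)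
    (interp_term_summable hc τ2) (interp_term_summable hc τ1)

theorem interp_le_of_nat_le (hc : ∀ q, c (q + 1) ≤ c q)
    (hc0 : Filter.Tendsto c Filter.atTop (nhds 0)) (n : ℕ) (τ : ℝ≥0)
    (h : (n : ℝ≥0) ≤ τ) : interp c τ ≤ c n := by
  rw [← interp_nat hc hc0 n]
  exact interp_anti hc h

theorem interp_tendsto (hc : ∀ q, c (q + 1) ≤ c q)
    (hc0 : Filter.Tendsto c Filter.atTop (nhds 0)) :
    Filter.Tendsto (interp c) Filter.atTop (nhds 0) := by
  rw [tendsto_order]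
  constructor
  · intro a ha; exact absurd ha (by simp)
  · intro a ha
    obtain ⟨n, hn⟩ := (hc0.eventually (gt_mem_nhds ha)).exists
    filter_upwards [Filter.eventually_ge_atTop ((n : ℝ≥0))] with τ hτ
    exact lt_of_le_of_lt (interp_le_of_nat_le hc hc0 n τ hτ) hn

theorem interp_continuous (hc : ∀ q, c (q + 1) ≤ c q) : Continuous (interp c) := by
  have hs : Summable (fun q => (dseq c q : ℝ)) := NNReal.summable_coe.2 (dseq_summable hc)
  have hcont : Continuous (fun τ : ℝ≥0 =>
      ∑' q, ((dseq c q : ℝ) * ((((q : ℝ≥0) + 1 - τ) ⊓ 1 : ℝ≥0) : ℝ))) := by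
    refine continuous_tsum ?_ hs ?_
    · intro q
      exact continuous_const.mul (NNReal.continuous_coe.comp
        ((continuous_const.sub continuous_id).min continuous_const))
    · intro q τ
      rw [Real.norm_eq_abs, abs_of_nonneg (by positivity)]
      refine mul_le_of_le_one_right (dseq c q).coe_nonneg ?_
      exact_mod_cast (min_le_right _ _ : (((q : ℝ≥0) + 1 - τ) ⊓ 1) ≤ 1)
  have heq : ∀ τ, interp c τ =
      Real.toNNReal (∑' q, ((dseq c q : ℝ) * ((((q : ℝ≥0) + 1 - τ) ⊓ 1 : ℝ≥0) : ℝ))) := by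
    intro τ
    have : ((interp c τ : ℝ≥0) : ℝ) =
        ∑' q, ((dseq c q : ℝ) * ((((q : ℝ≥0) + 1 - τ) ⊓ 1 : ℝ≥0) : ℝ)) := by
      rw [interp]
      rw [NNReal.coe_tsum]
      exact tsum_congr fun q => NNReal.coe_mul _ _
    rw [← this, Real.toNNReal_coe]
  have : interp c = fun τ =>
      Real.toNNReal (∑' q, ((dseq c q : ℝ) * ((((q : ℝ≥0) + 1 - τ) ⊓ 1 : ℝ≥0) : ℝ))) :=
    funext heq
  rw [this]
  exact continuous_real_toNNReal.comp hcont

theorem nnreal_combine (a b w : ℝ≥0) (hba : b ≤ a) (hw : w ≤ 1) :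
    (a - b) * w + b = b * (1 - w) + a * w := by
  have hbw : b * w ≤ a * w := mul_le_mul_left hba w
  have h2 : b * (1 - w) + b * w = b := by
    rw [← mul_add, tsub_add_cancel_of_le hw, mul_one]
  rw [tsub_mul]
  calc a * w - b * w + b = b + (a * w - b * w) := add_comm _ _
  _ = (b * (1 - w) + b * w) + (a * w - b * w) := by rw [h2]
  _ = b * (1 - w) + (b * w + (a * w - b * w)) := add_assoc _ _ _
  _ = b * (1 - w) + a * w := by rw [add_tsub_cancel_of_le hbw]

theorem interp_eq' (hc : ∀ q, c (q + 1) ≤ c q) (hc0 : Filter.Tendsto c Filter.atTop (nhds 0))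
    (τ : ℝ≥0) :
    interp c τ = c (⌊τ⌋₊ + 1) * (1 - (((⌊τ⌋₊ : ℝ≥0) + 1 - τ) ⊓ 1)) +
      c ⌊τ⌋₊ * (((⌊τ⌋₊ : ℝ≥0) + 1 - τ) ⊓ 1) := by
  rw [interp_eq hc hc0 ⌊τ⌋₊ τ (Nat.floor_le ((zero_le : 0 ≤ τ))) (Nat.lt_floor_add_one τ)]
  exact nnreal_combine (c ⌊τ⌋₊) (c (⌊τ⌋₊ + 1)) _ (hc _) (min_le_right _ _)

end SGaux
namespace SGaux

open Filter

noncomputable def PP (ω₁ : ℝ≥0 → ℝ≥0) : ℕ → ℝ≥0 → ℝ≥0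
  | 0 => fun s => s
  | r + 1 => fun s => ω₁ (2 * PP ω₁ r s)

noncomputable def QQ (ω₁ ω₂ : ℝ≥0 → ℝ≥0) : ℕ → ℝ≥0 → ℝ≥0
  | 0 => fun _ => 0
  | r + 1 => fun v => ω₁ (2 * QQ ω₁ ω₂ r v) + ω₂ v

variable {ω₁ ω₂ : ℝ≥0 → ℝ≥0}

theorem PP_mono (h : ClassK ω₁) (r : ℕ) : Monotone (PP ω₁ r) := by
  induction r with
  | zero => exact fun a b hab => hab
  | succ r ih => exact fun a b hab => classK_mono h (mul_le_mul_right (ih hab) 2)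

theorem PP_cont (h : ClassK ω₁) (r : ℕ) : Continuous (PP ω₁ r) := by
  induction r with
  | zero => exact continuous_id
  | succ r ih => exact h.1.comp (continuous_const.mul ih)

theorem PP_zero (h : ClassK ω₁) (r : ℕ) : PP ω₁ r 0 = 0 := by
  induction r with
  | zero => rfl
  | succ r ih => show ω₁ (2 * PP ω₁ r 0) = 0; rw [ih, mul_zero, h.2.2]

theorem QQ_mono (h1 : ClassK ω₁) (h2 : ClassK ω₂) (r : ℕ) : Monotone (QQ ω₁ ω₂ r) := by
  induction r with
  | zero => exact monotone_const
  | succ r ih =>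
    intro a b hab
    exact add_le_add (classK_mono h1 (mul_le_mul_right (ih hab) 2)) (classK_mono h2 hab)

theorem QQ_cont (h1 : ClassK ω₁) (h2 : ClassK ω₂) (r : ℕ) : Continuous (QQ ω₁ ω₂ r) := by
  induction r with
  | zero => exact continuous_const
  | succ r ih => exact (h1.1.comp (continuous_const.mul ih)).add h2.1

theorem QQ_zero (h1 : ClassK ω₁) (h2 : ClassK ω₂) (r : ℕ) : QQ ω₁ ω₂ r 0 = 0 := by
  induction r with
  | zero => rfl
  | succ r ih => show ω₁ (2 * QQ ω₁ ω₂ r 0) + ω₂ 0 = 0; rw [ih, mul_zero, h1.2.2, h2.2.2, add_zero]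

theorem iss_of_finstep {E F : Type*} [NormedAddCommGroup E] [NormedAddCommGroup F]
    (G : E → F → E) (hG : GloballyKBounded G) (M : ℕ) (hM : 1 ≤ M)
    (W : E → ℝ≥0) (α1 α2 : ℝ≥0 → ℝ≥0) (hα1 : ClassKInf α1) (hα2 : ClassKInf α2)
    (hW : ∀ ξ, α1 ‖ξ‖₊ ≤ W ξ ∧ W ξ ≤ α2 ‖ξ‖₊)
    (ρ σ : ℝ≥0 → ℝ≥0) (hρc : Continuous ρ) (hρm : Monotone ρ) (hρle : ∀ s, ρ s ≤ s)
    (η : ℝ≥0 → ℝ≥0) (hη : ClassKInf η) (hρη : ∀ s, s - ρ s = η s)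
    (hσ : ClassK σ)
    (hdec : ∀ ξ u, BddInput u → W (sol G ξ u M) ≤ ρ (W ξ) + σ (supNorm u)) :
    ISS G := by
  obtain ⟨ω₁, ω₂, hω₁, hω₂, hGb⟩ := hG
  obtain ⟨a1inv, ha1invK, ha1L, ha1R⟩ := exists_inv hα1
  -- the function θ = η/2 and its inverse
  have h2ne : (2 : ℝ≥0) ≠ 0 := two_ne_zero
  have h2inv : (0 : ℝ≥0) < 2⁻¹ := by positivity
  set θ : ℝ≥0 → ℝ≥0 := fun s => η s * 2⁻¹ with hθdef
  have hθK : ClassKInf θ := by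
    refine ⟨⟨hη.1.1.mul continuous_const, fun a b h => mul_lt_mul_of_pos_right (hη.1.2.1 h) h2inv, ?_⟩, ?_⟩
    · show η 0 * 2⁻¹ = 0; rw [hη.1.2.2, zero_mul]
    · rw [Filter.tendsto_atTop]
      intro b
      filter_upwards [Filter.tendsto_atTop.1 hη.2 (2 * b)] with s hs
      calc b = 2 * b * 2⁻¹ := by rw [mul_comm 2 b, mul_assoc, mul_inv_cancel₀ h2ne, mul_one]
      _ ≤ η s * 2⁻¹ := mul_le_mul_left hs _
  obtain ⟨θinv, hθinvK, hθL, hθR⟩ := exists_inv hθK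
  -- ρ2 = (id + ρ)/2
  set ρ2 : ℝ≥0 → ℝ≥0 := fun s => (s + ρ s) * 2⁻¹ with hρ2def
  have hρ2m : Monotone ρ2 := fun a b h => mul_le_mul_left (add_le_add h (hρm h)) _
  have hρ2c : Continuous ρ2 := (continuous_id.add hρc).mul continuous_const
  have hρ0 : ρ 0 = 0 := le_antisymm (hρle 0) (zero_le)
  have hρ2zero : ρ2 0 = 0 := by show ((0:ℝ≥0) + ρ 0) * 2⁻¹ = 0; rw [hρ0, add_zero, zero_mul]
  have hρ2le : ∀ s, ρ2 s ≤ s := by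
    intro s
    show (s + ρ s) * 2⁻¹ ≤ s
    calc (s + ρ s) * 2⁻¹ ≤ (s + s) * 2⁻¹ := mul_le_mul_left (add_le_add_right (hρle s) s) _
    _ = s := by rw [← two_mul, mul_comm 2 s, mul_assoc, mul_inv_cancel₀ h2ne, mul_one]
  have hsum : ∀ s, ρ s + η s = s := by
    intro s; rw [← hρη s]; exact add_tsub_cancel_of_le (hρle s)
  have hkey : ∀ s, ρ s + θ s = ρ2 s := by
    intro s
    show ρ s + η s * 2⁻¹ = (s + ρ s) * 2⁻¹
    have hsR : (ρ s : ℝ) + (η s : ℝ) = (s : ℝ) := by exact_mod_cast hsum s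
    apply NNReal.coe_injective
    push_cast
    linarith
  have hρ2lt : ∀ s, 0 < s → ρ2 s < s := by
    intro s hs
    have hηpos : 0 < η s := by rw [← hη.1.2.2]; exact hη.1.2.1 hs
    have hθlt : θ s < η s := by
      show η s * 2⁻¹ < η s
      refine mul_lt_of_lt_one_right hηpos ?_
      rw [← NNReal.coe_lt_coe]
      norm_num
    calc ρ2 s = ρ s + θ s := (hkey s).symm
    _ < ρ s + η s := add_lt_add_right hθlt _
    _ = s := hsum s
  -- gain from the input
  set ghat : ℝ≥0 → ℝ≥0 := fun v => θinv (σ v) + σ v with hghatdef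
  have hghatm : Monotone ghat := fun a b h =>
    add_le_add (hθinvK.1.2.1.monotone (hσ.2.1.monotone h)) (hσ.2.1.monotone h)
  -- one M-step estimate
  have step1 : ∀ ξ u, BddInput u →
      W (sol G ξ u M) ≤ max (ρ2 (W ξ)) (ghat (supNorm u)) := by
    intro ξ u hu
    rcases le_total (σ (supNorm u)) (θ (W ξ)) with h | h
    · refine le_max_of_le_left ?_
      calc W (sol G ξ u M) ≤ ρ (W ξ) + σ (supNorm u) := hdec ξ u hu
      _ ≤ ρ (W ξ) + θ (W ξ) := add_le_add_right h _
      _ = ρ2 (W ξ) := hkey _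
    · refine le_max_of_le_right ?_
      have hle : W ξ ≤ θinv (σ (supNorm u)) := by
        have hR := hθR (σ (supNorm u))
        rw [← hR] at h
        exact (hθK.1.2.1.le_iff_le).1 h
      calc W (sol G ξ u M) ≤ ρ (W ξ) + σ (supNorm u) := hdec ξ u hu
      _ ≤ θinv (σ (supNorm u)) + σ (supNorm u) :=
        add_le_add_left (le_trans (hρle _) hle) _
  -- iterated estimate
  have step2 : ∀ (q : ℕ) ξ u, BddInput u →
      W (sol G ξ u (M * q)) ≤ max (ρ2^[q] (W ξ)) (ghat (supNorm u)) := by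
    intro q
    induction q with
    | zero => intro ξ u hu; exact le_max_of_le_left le_rfl
    | succ q ih =>
      intro ξ u hu
      have hM1 : M * (q + 1) = M * q + M := by ring
      rw [hM1, sol_add]
      refine le_trans (step1 (sol G ξ u (M * q)) _ (bddInput_shift hu _)) (max_le ?_ ?_)
      · calc ρ2 (W (sol G ξ u (M * q)))
            ≤ ρ2 (max (ρ2^[q] (W ξ)) (ghat (supNorm u))) := hρ2m (ih ξ u hu)
        _ = max (ρ2 (ρ2^[q] (W ξ))) (ρ2 (ghat (supNorm u))) := hρ2m.map_max
        _ ≤ max (ρ2^[q + 1] (W ξ)) (ghat (supNorm u)) :=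
          max_le_max (le_of_eq (Function.iterate_succ_apply' ρ2 q _).symm) (hρ2le _)
      · exact le_trans (hghatm (supNorm_shift_le hu _)) (le_max_right _ _)
  -- iterates of ρ2 tend to zero
  have hiter_anti : ∀ z : ℝ≥0, Antitone fun q => ρ2^[q] z := by
    intro z
    refine antitone_nat_of_succ_le fun q => ?_
    rw [Function.iterate_succ_apply']
    exact hρ2le _
  have hiter0 : ∀ z : ℝ≥0, Tendsto (fun q => ρ2^[q] z) atTop (nhds 0) := by
    intro z
    have hbdd : BddBelow (Set.range fun q => ρ2^[q] z) := ⟨0, fun x _ => (zero_le : 0 ≤ x)⟩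
    have hlim := tendsto_atTop_ciInf (hiter_anti z) hbdd
    have hLfix : ρ2 (⨅ q, ρ2^[q] z) = ⨅ q, ρ2^[q] z := by
      have h1 : Tendsto (fun q => ρ2^[q + 1] z) atTop (nhds (⨅ q, ρ2^[q] z)) :=
        hlim.comp (tendsto_add_atTop_nat 1)
      have h2 : Tendsto (fun q => ρ2 (ρ2^[q] z)) atTop (nhds (ρ2 (⨅ q, ρ2^[q] z))) :=
        (hρ2c.tendsto _).comp hlim
      have heq : (fun q => ρ2^[q + 1] z) = fun q => ρ2 (ρ2^[q] z) :=
        funext fun q => Function.iterate_succ_apply' ρ2 q z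
      rw [heq] at h1
      exact tendsto_nhds_unique h2 h1
    have hL0 : (⨅ q, ρ2^[q] z) = 0 := by
      by_contra hne
      exact absurd hLfix (ne_of_lt (hρ2lt _ (zero_lt_iff.2 hne)))
    rwa [hL0] at hlim
  -- trajectory bound between multiples of M
  have solb : ∀ (r : ℕ) (ζ : E) (u : ℕ → F), BddInput u →
      ‖sol G ζ u r‖₊ ≤ PP ω₁ r ‖ζ‖₊ + QQ ω₁ ω₂ r (supNorm u) := by
    intro r
    induction r with
    | zero =>
      intro ζ u hu
      simp only [PP, QQ, add_zero]
      exact le_rfl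
    | succ r ih =>
      intro ζ u hu
      calc ‖sol G ζ u (r + 1)‖₊ = ‖G (sol G ζ u r) (u r)‖₊ := rfl
      _ ≤ ω₁ ‖sol G ζ u r‖₊ + ω₂ ‖u r‖₊ := hGb _ _
      _ ≤ ω₁ (PP ω₁ r ‖ζ‖₊ + QQ ω₁ ω₂ r (supNorm u)) + ω₂ (supNorm u) :=
        add_le_add (classK_mono hω₁ (ih ζ u hu)) (classK_mono hω₂ (le_supNorm hu r))
      _ ≤ (ω₁ (2 * PP ω₁ r ‖ζ‖₊) + ω₁ (2 * QQ ω₁ ω₂ r (supNorm u))) + ω₂ (supNorm u) :=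
        add_le_add_left (mono_two_bound (classK_mono hω₁) _ _) _
      _ = PP ω₁ (r + 1) ‖ζ‖₊ + QQ ω₁ ω₂ (r + 1) (supNorm u) := by
        show _ = ω₁ (2 * PP ω₁ r ‖ζ‖₊) + (ω₁ (2 * QQ ω₁ ω₂ r (supNorm u)) + ω₂ (supNorm u))
        rw [add_assoc]
  -- max over the first M steps
  have hMne : (Finset.range M).Nonempty := ⟨0, Finset.mem_range.2 (by omega)⟩
  set Pmax : ℝ≥0 → ℝ≥0 := fun z => (Finset.range M).sup fun r => PP ω₁ r z with hPmaxdef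
  set Qmax : ℝ≥0 → ℝ≥0 := fun v => (Finset.range M).sup fun r => QQ ω₁ ω₂ r v with hQmaxdef
  have hPmaxm : Monotone Pmax := fun a b h => Finset.sup_le fun r hr =>
    le_trans (PP_mono hω₁ r h) (Finset.le_sup (f := fun r => PP ω₁ r b) hr)
  have hPmaxc : Continuous Pmax :=
    continuous_finset_sup _ _ fun r _ => PP_cont hω₁ r
  have hPmax0 : Pmax 0 = 0 :=
    le_antisymm (Finset.sup_le fun r _ => le_of_eq (PP_zero hω₁ r)) (zero_le)
  have hQmaxm : Monotone Qmax := fun a b h => Finset.sup_le fun r hr =>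
    le_trans (QQ_mono hω₁ hω₂ r h) (Finset.le_sup (f := fun r => QQ ω₁ ω₂ r b) hr)
  have hQmaxc : Continuous Qmax :=
    continuous_finset_sup _ _ fun r _ => QQ_cont hω₁ hω₂ r
  have hQmax0 : Qmax 0 = 0 :=
    le_antisymm (Finset.sup_le fun r _ => le_of_eq (QQ_zero hω₁ hω₂ r)) (zero_le)
  set Φ : ℝ≥0 → ℝ≥0 := fun z => Pmax (2 * a1inv z) with hΦdef
  have hΦm : Monotone Φ := fun a b h =>
    hPmaxm (mul_le_mul_right (ha1invK.1.2.1.monotone h) 2)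
  have hΦc : Continuous Φ := hPmaxc.comp (continuous_const.mul ha1invK.1.1)
  have hΦ0 : Φ 0 = 0 := by
    show Pmax (2 * a1inv 0) = 0
    rw [ha1invK.1.2.2, mul_zero, hPmax0]
  -- the decreasing sequences
  set cz : ℝ≥0 → ℕ → ℝ≥0 := fun z q => Φ (ρ2^[q] z) with hczdef
  have hczdec : ∀ z q, cz z (q + 1) ≤ cz z q := fun z q =>
    hΦm (hiter_anti z (Nat.le_succ q))
  have hcz0 : ∀ z, Tendsto (cz z) atTop (nhds 0) := by
    intro z
    have := (hΦc.tendsto 0).comp (hiter0 z)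
    rwa [hΦ0] at this
  have hczmono : ∀ q, Monotone fun z => cz z q := fun q a b h =>
    hΦm ((hρ2m.iterate q) h)
  have hczcont : ∀ q, Continuous fun z => cz z q := fun q =>
    hΦc.comp (hρ2c.iterate q)
  have hczzero : ∀ q, cz 0 q = 0 := by
    intro q
    show Φ (ρ2^[q] 0) = 0
    rw [Function.iterate_fixed hρ2zero q, hΦ0]
  -- time rescaling and the exponential-like tail
  have hMcast : ((M : ℝ≥0)) ≠ 0 := Nat.cast_ne_zero.2 (by omega)
  set τf : ℝ≥0 → ℝ≥0 := fun t => t / (M : ℝ≥0) - 1 with hτfdef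
  have hτfm : Monotone τf := by
    intro a b h
    refine tsub_le_tsub_right ?_ 1
    rw [div_eq_mul_inv, div_eq_mul_inv]
    exact mul_le_mul_left h _
  have hτfc : Continuous τf := by
    have : Continuous fun t : ℝ≥0 => t / (M : ℝ≥0) := by
      simp only [div_eq_mul_inv]
      exact continuous_id.mul continuous_const
    exact this.sub continuous_const
  have hτfatTop : Tendsto τf atTop atTop := by
    rw [Filter.tendsto_atTop]
    intro b
    filter_upwards [Filter.eventually_ge_atTop ((b + 1) * (M : ℝ≥0))] with t ht
    have h1 : b + 1 ≤ t / (M : ℝ≥0) := (le_div_iff₀ (pos_iff_ne_zero.2 hMcast)).2 ht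
    exact le_tsub_of_add_le_right h1
  -- tail term
  set b2 : ℝ≥0 → ℝ≥0 := fun t => (1 + t)⁻¹ with hb2def
  have hb2pos : ∀ t, 0 < b2 t := by
    intro t
    show 0 < (1 + t)⁻¹
    rw [inv_pos]
    positivity
  have hb2c : Continuous b2 := by
    refine (continuous_const.add continuous_id).inv₀ fun t => ?_
    exact ne_of_gt (add_pos_of_pos_of_nonneg one_pos zero_le)
  have hb2anti : StrictAnti b2 := by
    intro t1 t2 h
    exact inv_strictAnti₀ (by positivity) (add_lt_add_right h 1)
  have hb2tendsto : Tendsto b2 atTop (nhds 0) := by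
    rw [tendsto_order]
    constructor
    · intro a ha; exact absurd ha (by simp)
    · intro a ha
      filter_upwards [Filter.eventually_ge_atTop a⁻¹] with t ht
      have h1 : a⁻¹ < 1 + t := lt_of_le_of_lt ht (lt_one_add t)
      have h2 : (1 + t)⁻¹ < (a⁻¹)⁻¹ := inv_strictAnti₀ (by positivity) h1
      rwa [inv_inv] at h2
  -- the KL function and the gain
  set β : ℝ≥0 → ℝ≥0 → ℝ≥0 := fun s t => interp (cz (α2 s)) (τf t) + s * b2 t with hβdef
  set γf : ℝ≥0 → ℝ≥0 := fun v => Φ (ghat v) + Qmax v + v with hγfdef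
  have hghatc : Continuous ghat := (hθinvK.1.1.comp hσ.1).add hσ.1
  have hghat0 : ghat 0 = 0 := by
    show θinv (σ 0) + σ 0 = 0
    rw [hσ.2.2, hθinvK.1.2.2, add_zero]
  refine ⟨β, γf, ⟨?_, ?_⟩, ⟨?_, ?_, ?_⟩, ?_⟩
  · -- β is class K in s for every fixed t
    intro t
    have hrw : (fun s => β s t) = fun s =>
        (cz (α2 s) (⌊τf t⌋₊ + 1) * (1 - (((⌊τf t⌋₊ : ℝ≥0) + 1 - τf t) ⊓ 1)) +
          cz (α2 s) ⌊τf t⌋₊ * (((⌊τf t⌋₊ : ℝ≥0) + 1 - τf t) ⊓ 1)) + s * b2 t := by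
      funext s
      show interp (cz (α2 s)) (τf t) + s * b2 t = _
      rw [interp_eq' (hczdec (α2 s)) (hcz0 (α2 s)) (τf t)]
    rw [hrw]
    refine ⟨?_, ?_, ?_⟩
    · exact ((((hczcont _).comp hα2.1.1).mul continuous_const).add
        (((hczcont _).comp hα2.1.1).mul continuous_const)).add
        (continuous_id.mul continuous_const)
    · intro a b h
      refine add_lt_add_of_le_of_lt ?_ (mul_lt_mul_of_pos_right h (hb2pos t))
      exact add_le_add (mul_le_mul_left (hczmono _ (hα2.1.2.1.monotone h.le)) _)
        (mul_le_mul_left (hczmono _ (hα2.1.2.1.monotone h.le)) _)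
    · simp only [hα2.1.2.2, hczzero, zero_mul, add_zero, zero_add, mul_zero]
  · -- for each s > 0, β s is continuous, strictly decreasing, tends to 0
    intro s hs
    refine ⟨?_, ?_, ?_⟩
    · exact ((interp_continuous (hczdec (α2 s))).comp hτfc).add
        (continuous_const.mul hb2c)
    · intro t1 t2 h
      exact add_lt_add_of_le_of_lt ((interp_anti (hczdec (α2 s))).comp_monotone hτfm h.le)
        (mul_lt_mul_of_pos_left (hb2anti h) hs)
    · have h1 : Tendsto (fun t => interp (cz (α2 s)) (τf t)) atTop (nhds 0) :=
        (interp_tendsto (hczdec (α2 s)) (hcz0 (α2 s))).comp hτfatTop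
      have h2 : Tendsto (fun t => s * b2 t) atTop (nhds 0) := by
        have := hb2tendsto.const_mul s
        rwa [mul_zero] at this
      have := h1.add h2
      rwa [add_zero] at this
  · -- γf continuous
    exact ((hΦc.comp hghatc).add hQmaxc).add continuous_id
  · -- γf strictly increasing
    intro a b h
    exact add_lt_add_of_le_of_lt
      (add_le_add (hΦm (hghatm h.le)) (hQmaxm h.le)) h
  · -- γf 0 = 0
    show Φ (ghat 0) + Qmax 0 + 0 = 0
    rw [hghat0, hΦ0, hQmax0, add_zero, add_zero]
  · -- the ISS estimate
    intro ξ u hu k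
    set q : ℕ := k / M with hqdef
    set r : ℕ := k % M with hrdef
    have hk : M * q + r = k := Nat.div_add_mod k M
    have hrM : r < M := Nat.mod_lt _ (by omega)
    have hsoleq : sol G ξ u k = sol G (sol G ξ u (M * q)) (fun j => u (M * q + j)) r := by
      conv_lhs => rw [← hk]
      exact sol_add G ξ u (M * q) r
    -- bound on the norm at time M*q
    have hWb : W (sol G ξ u (M * q)) ≤
        max (ρ2^[q] (α2 ‖ξ‖₊)) (ghat (supNorm u)) := by
      refine le_trans (step2 q ξ u hu) (max_le_max ?_ le_rfl)
      exact (hρ2m.iterate q) (hW ξ).2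
    have hXb : ‖sol G ξ u (M * q)‖₊ ≤
        a1inv (ρ2^[q] (α2 ‖ξ‖₊)) + a1inv (ghat (supNorm u)) := by
      have h1 : ‖sol G ξ u (M * q)‖₊ = a1inv (α1 ‖sol G ξ u (M * q)‖₊) := (ha1L _).symm
      rw [h1]
      have h2 : α1 ‖sol G ξ u (M * q)‖₊ ≤ max (ρ2^[q] (α2 ‖ξ‖₊)) (ghat (supNorm u)) :=
        le_trans (hW _).1 hWb
      have h3 := ha1invK.1.2.1.monotone h2
      rw [ha1invK.1.2.1.monotone.map_max] at h3
      exact le_trans h3 (max_le (le_add_right le_rfl) (le_add_left le_rfl))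
    -- bound on the norm at time k
    have hnorm : ‖sol G ξ u k‖₊ ≤
        cz (α2 ‖ξ‖₊) q + (Φ (ghat (supNorm u)) + Qmax (supNorm u)) := by
      rw [hsoleq]
      have h1 := solb r (sol G ξ u (M * q)) (fun j => u (M * q + j)) (bddInput_shift hu _)
      refine le_trans h1 ?_
      have h2 : QQ ω₁ ω₂ r (supNorm fun j => u (M * q + j)) ≤ Qmax (supNorm u) :=
        le_trans (QQ_mono hω₁ hω₂ r (supNorm_shift_le hu _))
          (Finset.le_sup (f := fun r => QQ ω₁ ω₂ r (supNorm u)) (Finset.mem_range.2 hrM))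
      have h3 : PP ω₁ r ‖sol G ξ u (M * q)‖₊ ≤
          cz (α2 ‖ξ‖₊) q + Φ (ghat (supNorm u)) := by
        calc PP ω₁ r ‖sol G ξ u (M * q)‖₊
            ≤ PP ω₁ r (a1inv (ρ2^[q] (α2 ‖ξ‖₊)) + a1inv (ghat (supNorm u))) :=
              PP_mono hω₁ r hXb
        _ ≤ PP ω₁ r (2 * a1inv (ρ2^[q] (α2 ‖ξ‖₊))) + PP ω₁ r (2 * a1inv (ghat (supNorm u))) :=
              mono_two_bound (PP_mono hω₁ r) _ _
        _ ≤ Pmax (2 * a1inv (ρ2^[q] (α2 ‖ξ‖₊))) + Pmax (2 * a1inv (ghat (supNorm u))) :=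
              add_le_add
                (Finset.le_sup (f := fun r => PP ω₁ r (2 * a1inv (ρ2^[q] (α2 ‖ξ‖₊)))) (Finset.mem_range.2 hrM))
                (Finset.le_sup (f := fun r => PP ω₁ r (2 * a1inv (ghat (supNorm u)))) (Finset.mem_range.2 hrM))
        _ = cz (α2 ‖ξ‖₊) q + Φ (ghat (supNorm u)) := rfl
      calc PP ω₁ r ‖sol G ξ u (M * q)‖₊ + QQ ω₁ ω₂ r (supNorm fun j => u (M * q + j))
          ≤ (cz (α2 ‖ξ‖₊) q + Φ (ghat (supNorm u))) + Qmax (supNorm u) := add_le_add h3 h2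
      _ = cz (α2 ‖ξ‖₊) q + (Φ (ghat (supNorm u)) + Qmax (supNorm u)) := add_assoc _ _ _
    -- relate cz … q to β
    have hτk : τf ((k : ℕ) : ℝ≥0) ≤ (q : ℝ≥0) := by
      refine tsub_le_iff_right.2 ?_
      refine (div_le_iff₀ (pos_iff_ne_zero.2 hMcast)).2 ?_
      have hkle : k ≤ (q + 1) * M := by
        calc k = M * q + r := hk.symm
        _ ≤ M * q + M := Nat.add_le_add_left hrM.le _
        _ = (q + 1) * M := by ring
      calc ((k : ℕ) : ℝ≥0) ≤ (((q + 1) * M : ℕ) : ℝ≥0) := by exact_mod_cast hkle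
      _ = ((q : ℝ≥0) + 1) * (M : ℝ≥0) := by push_cast; ring
    have hczβ : cz (α2 ‖ξ‖₊) q ≤ β ‖ξ‖₊ ((k : ℕ) : ℝ≥0) := by
      have h1 : cz (α2 ‖ξ‖₊) q = interp (cz (α2 ‖ξ‖₊)) ((q : ℕ) : ℝ≥0) :=
        (interp_nat (hczdec _) (hcz0 _) q).symm
      rw [h1]
      refine le_trans (interp_anti (hczdec _) hτk) ?_
      exact le_add_right le_rfl
    refine le_trans hnorm ?_
    refine add_le_add hczβ ?_
    exact le_add_right le_rfl

end SGaux

/-- Relaxed ISS small-gain theorem, summation form. -/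
theorem relaxed_small_gain_sum
    {N : ℕ} (hN : 0 < N)
    {E : Fin N → Type*} [∀ i, NormedAddCommGroup (E i)]
    [∀ i, NormedSpace ℝ (E i)] [∀ i, FiniteDimensional ℝ (E i)]
    {F : Type*} [NormedAddCommGroup F] [NormedSpace ℝ F] [FiniteDimensional ℝ F]
    (G : (∀ i, E i) → F → (∀ i, E i)) (hG : GloballyKBounded G)
    (M : ℕ) (hM : 1 ≤ M)
    (γ : Fin N → Fin N → ℝ≥0 → ℝ≥0)
    (hγ : ∀ i j, ClassKInf (γ i j) ∨ γ i j = fun _ => 0)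
    (γu : Fin N → ℝ≥0 → ℝ≥0)
    (hγu : ∀ i, ClassK (γu i) ∨ γu i = fun _ => 0)
    (δ₁ δ₂ : Fin N → ℝ≥0 → ℝ≥0)
    (hδ₁ : ∀ i, ClassKInf (δ₁ i)) (hδ₂ : ∀ i, ClassKInf (δ₂ i))
    (V : ∀ i, E i → ℝ≥0) (hV : ∀ i, ProperPosDef (V i))
    -- (1) finite-step decrease in summation form
    (hdec : ∀ (i : Fin N) (ξ : ∀ i, E i) (u : ℕ → F), BddInput u →
      V i (sol G ξ u M i) ≤
        (Finset.univ.sup fun j => γ i j (V j (ξ j))) + γu i (supNorm u))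
    -- (2) an Ω-path σ' for D₁ ∘ Γ⊕ ∘ D₂
    (σ' : Fin N → ℝ≥0 → ℝ≥0) (hσ : ∀ i, ClassKInf (σ' i))
    (hpath : ∀ (i : Fin N) (r : ℝ≥0), 0 < r →
      (Finset.univ.sup fun j => γ i j (σ' j r + δ₂ j (σ' j r))) +
        δ₁ i (Finset.univ.sup fun j => γ i j (σ' j r + δ₂ j (σ' j r))) < σ' i r)
    -- inverses of the σ'ᵢ and of id + δᵢ₂
    (σinv d₂inv : Fin N → ℝ≥0 → ℝ≥0)
    (hσinv : ∀ i, Function.LeftInverse (σinv i) (σ' i) ∧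
      Function.RightInverse (σinv i) (σ' i))
    (hd₂inv : ∀ i, Function.LeftInverse (d₂inv i) (fun s => s + δ₂ i s) ∧
      Function.RightInverse (d₂inv i) (fun s => s + δ₂ i s))
    -- (3) the functions α̂ᵢ with σ'ᵢ⁻¹ ∘ (id + δᵢ₂)⁻¹ ∘ σ'ᵢ = id − α̂ᵢ
    (hαhat : ∀ i, ∃ αhat : ℝ≥0 → ℝ≥0, ClassKInf αhat ∧
      ∀ s, σinv i (d₂inv i (σ' i s)) = s - αhat s) :
    DissFinStepLyapAt G
      (fun ξ => Finset.univ.sup fun i => σinv i (d₂inv i (V i (ξ i)))) M ∧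
    ISS G := by
  classical
  have i0 : Fin N := ⟨0, hN⟩
  have huniv : (Finset.univ : Finset (Fin N)).Nonempty := ⟨i0, Finset.mem_univ i0⟩
  -- basic monotonicity/zero facts for the gains
  have hγm : ∀ i j, Monotone (γ i j) := by
    intro i j; rcases hγ i j with h | h
    · exact h.1.2.1.monotone
    · rw [h]; exact monotone_const
  have hγ0 : ∀ i j, γ i j 0 = 0 := by
    intro i j; rcases hγ i j with h | h
    · exact h.1.2.2
    · rw [h]
  have hγum : ∀ i, Monotone (γu i) := by
    intro i; rcases hγu i with h | h
    · exact h.2.1.monotone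
    · rw [h]; exact monotone_const
  have hγuc : ∀ i, Continuous (γu i) := by
    intro i; rcases hγu i with h | h
    · exact h.1
    · rw [h]; exact continuous_const
  have hγu0 : ∀ i, γu i 0 = 0 := by
    intro i; rcases hγu i with h | h
    · exact h.2.2
    · rw [h]
  -- id + δ₂ is of class K∞
  have hd₂K : ∀ i, ClassKInf fun s => s + δ₂ i s := by
    intro i
    refine ⟨⟨continuous_id.add (hδ₂ i).1.1,
      fun a b h => add_lt_add_of_lt_of_le h (((hδ₂ i).1.2.1 h).le), ?_⟩, ?_⟩
    · show (0 : ℝ≥0) + δ₂ i 0 = 0; rw [(hδ₂ i).1.2.2, add_zero]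
    · exact tendsto_atTop_mono (fun s => le_add_right le_rfl) tendsto_id
  have hσinvK : ∀ i, ClassKInf (σinv i) := fun i =>
    SGaux.inv_classKInf (hσ i) (hσinv i).1 (hσinv i).2
  have hd₂invK : ∀ i, ClassKInf (d₂inv i) := fun i =>
    SGaux.inv_classKInf (hd₂K i) (hd₂inv i).1 (hd₂inv i).2
  have hgK : ∀ i, ClassKInf fun v => σinv i (d₂inv i v) := fun i =>
    SGaux.classKInf_comp (hσinvK i) (hd₂invK i)
  -- inverses of the δ₁ᵢ
  choose δ₁inv hδ₁invK hδ₁L hδ₁R using fun i => SGaux.exists_inv (hδ₁ i)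
  -- the functions α̂
  choose αh hαhK hαheq using hαhat
  -- bounds for the Vᵢ
  choose Va Vb hVaK hVbK hVbnd using hV
  -- positivity of g ∘ σ'
  have hgpos : ∀ (i : Fin N) (s : ℝ≥0), 0 < s → 0 < σinv i (d₂inv i (σ' i s)) := by
    intro i s hs
    have h1 : 0 < σ' i s := by rw [← (hσ i).1.2.2]; exact (hσ i).1.2.1 hs
    have h2 : (0:ℝ≥0) = σinv i (d₂inv i 0) := by
      rw [(hd₂invK i).1.2.2, (hσinvK i).1.2.2]
    rw [h2]
    exact (hgK i).1.2.1 h1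
  have hαh_lt : ∀ (i : Fin N) (s : ℝ≥0), 0 < s → αh i s < s := by
    intro i s hs
    have h1 := hgpos i s hs
    rw [hαheq i s] at h1
    exact tsub_pos_iff_lt.1 h1
  have hαh_le : ∀ (i : Fin N) (s : ℝ≥0), αh i s ≤ s := by
    intro i s
    rcases eq_zero_or_pos s with h | h
    · rw [h, (hαhK i).1.2.2]
    · exact (hαh_lt i s h).le
  -- the functions ρ, η, σ of the Lyapunov decrease
  set ρf : ℝ≥0 → ℝ≥0 := fun s => Finset.univ.sup fun i => σinv i (d₂inv i (σ' i s))
    with hρfdef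
  set ηf : ℝ≥0 → ℝ≥0 := fun s => Finset.univ.inf' huniv fun i => αh i s with hηfdef
  set σf : ℝ≥0 → ℝ≥0 :=
    fun v => v + Finset.univ.sup fun i => σinv i (d₂inv i (δ₁inv i (γu i v) + γu i v))
    with hσfdef
  have hρfK : ClassKInf ρf := SGaux.classKInf_finset_sup _ huniv _
    (fun i _ => SGaux.classKInf_comp (φ := fun v => σinv i (d₂inv i v)) (hgK i) (hσ i))
  have hηfK : ClassKInf ηf := SGaux.classKInf_finset_inf' _ huniv _ (fun i _ => hαhK i)
  have hρfle : ∀ s, ρf s ≤ s := by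
    intro s
    refine Finset.sup_le fun i _ => ?_
    rw [hαheq i s]
    exact tsub_le_self
  have hρη : ∀ s, s - ρf s = ηf s := by
    intro s
    have hηles : ηf s ≤ s :=
      le_trans (Finset.inf'_le _ (Finset.mem_univ i0)) (hαh_le i0 s)
    have h1 : ρf s = s - ηf s := by
      refine le_antisymm (Finset.sup_le fun i _ => ?_) ?_
      · rw [hαheq i s]
        exact tsub_le_tsub_left (Finset.inf'_le (fun i => αh i s) (Finset.mem_univ i)) s
      · obtain ⟨i1, hi1mem, hi1⟩ := Finset.exists_mem_eq_inf' huniv (fun i => αh i s)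
        rw [hηfdef]
        simp only []
        rw [hi1, ← hαheq i1 s]
        exact Finset.le_sup (f := fun i => σinv i (d₂inv i (σ' i s))) (Finset.mem_univ i1)
    rw [h1, tsub_tsub_cancel_of_le hηles]
  have hσfK : ClassK σf := by
    have hcont : ∀ i : Fin N,
        Continuous fun v => σinv i (d₂inv i (δ₁inv i (γu i v) + γu i v)) := fun i =>
      (hgK i).1.1.comp (((hδ₁invK i).1.1.comp (hγuc i)).add (hγuc i))
    have hmono : ∀ i : Fin N,
        Monotone fun v => σinv i (d₂inv i (δ₁inv i (γu i v) + γu i v)) := fun i =>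
      fun a b h => (hgK i).1.2.1.monotone
        (add_le_add ((hδ₁invK i).1.2.1.monotone (hγum i h)) (hγum i h))
    refine ⟨continuous_id.add (SGaux.continuous_finset_sup _ _ fun i _ => hcont i), ?_, ?_⟩
    · intro a b h
      exact add_lt_add_of_lt_of_le h (Finset.sup_le fun i _ =>
        le_trans (hmono i h.le)
          (Finset.le_sup (f := fun i => σinv i (d₂inv i (δ₁inv i (γu i b) + γu i b)))
            (Finset.mem_univ i)))
    · show (0:ℝ≥0) + _ = 0
      rw [zero_add]
      refine le_antisymm (Finset.sup_le fun i _ => ?_) (zero_le)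
      rw [hγu0 i, (hδ₁invK i).1.2.2, add_zero, (hd₂invK i).1.2.2, (hσinvK i).1.2.2]
  have hρfPD : PosDefFun ρf :=
    ⟨hρfK.1.1, hρfK.1.2.2, fun s hs => lt_of_lt_of_le (hgpos i0 s hs)
      (Finset.le_sup (f := fun i => σinv i (d₂inv i (σ' i s))) (Finset.mem_univ i0))⟩
  -- proper positive definiteness of W
  set α₁W : ℝ≥0 → ℝ≥0 := fun s => Finset.univ.inf' huniv fun i => σinv i (d₂inv i (Va i s))
    with hα₁Wdef
  set α₂W : ℝ≥0 → ℝ≥0 := fun s => Finset.univ.sup fun i => σinv i (d₂inv i (Vb i s))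
    with hα₂Wdef
  have hα₁WK : ClassKInf α₁W := SGaux.classKInf_finset_inf' _ huniv _
    (fun i _ => SGaux.classKInf_comp (φ := fun v => σinv i (d₂inv i v)) (hgK i) (hVaK i))
  have hα₂WK : ClassKInf α₂W := SGaux.classKInf_finset_sup _ huniv _
    (fun i _ => SGaux.classKInf_comp (φ := fun v => σinv i (d₂inv i v)) (hgK i) (hVbK i))
  have hWbnd : ∀ ξ : ∀ i, E i,
      α₁W ‖ξ‖₊ ≤ (Finset.univ.sup fun i => σinv i (d₂inv i (V i (ξ i)))) ∧
      (Finset.univ.sup fun i => σinv i (d₂inv i (V i (ξ i)))) ≤ α₂W ‖ξ‖₊ := by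
    intro ξ
    constructor
    · obtain ⟨istar, histmem, hist⟩ :=
        Finset.exists_mem_eq_sup Finset.univ huniv (fun i => ‖ξ i‖₊)
    
      have hnorm : ‖ξ‖₊ = ‖ξ istar‖₊ := by
        rw [Pi.nnnorm_def]; exact hist
      rw [hnorm]
      refine le_trans (Finset.inf'_le (fun i => σinv i (d₂inv i (Va i ‖ξ istar‖₊)))
        (Finset.mem_univ istar)) ?_
      refine le_trans ((hgK istar).1.2.1.monotone (hVbnd istar (ξ istar)).1) ?_
      exact Finset.le_sup (f := fun i => σinv i (d₂inv i (V i (ξ i)))) (Finset.mem_univ istar)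
    · refine Finset.sup_le fun i _ => ?_
      refine le_trans ((hgK i).1.2.1.monotone (hVbnd i (ξ i)).2) ?_
      refine le_trans ((hgK i).1.2.1.monotone ((hVbK i).1.2.1.monotone
        (nnnorm_le_pi_nnnorm ξ i))) ?_
      exact Finset.le_sup (f := fun i => σinv i (d₂inv i (Vb i ‖ξ‖₊))) (Finset.mem_univ i)
  -- the finite-step decrease for W
  have hWdec : ∀ (ξ : ∀ i, E i) (u : ℕ → F), BddInput u →
      (Finset.univ.sup fun i => σinv i (d₂inv i (V i (sol G ξ u M i)))) ≤
        ρf (Finset.univ.sup fun i => σinv i (d₂inv i (V i (ξ i)))) + σf (supNorm u) := by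
    intro ξ u hu
    set rr := Finset.univ.sup fun i => σinv i (d₂inv i (V i (ξ i))) with hrrdef
    set v := supNorm u with hvdef
    have hVj : ∀ j, V j (ξ j) ≤ σ' j rr + δ₂ j (σ' j rr) := by
      intro j
      have h1 : σinv j (d₂inv j (V j (ξ j))) ≤ rr :=
        Finset.le_sup (f := fun i => σinv i (d₂inv i (V i (ξ i)))) (Finset.mem_univ j)
      have h2 := (hσ j).1.2.1.monotone h1
      rw [(hσinv j).2 _] at h2
      have h3 := (hd₂K j).1.2.1.monotone h2
      have h4 : d₂inv j (V j (ξ j)) + δ₂ j (d₂inv j (V j (ξ j))) = V j (ξ j) :=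
        (hd₂inv j).2 (V j (ξ j))
      rw [h4] at h3
      exact h3
    refine Finset.sup_le fun i _ => ?_
    have hVi : V i (sol G ξ u M i) ≤
        (Finset.univ.sup fun j => γ i j (σ' j rr + δ₂ j (σ' j rr))) + γu i v := by
      refine le_trans (hdec i ξ u hu) (add_le_add_left ?_ _)
      exact Finset.sup_le fun j _ => le_trans ((hγm i j) (hVj j))
        (Finset.le_sup (f := fun j => γ i j (σ' j rr + δ₂ j (σ' j rr))) (Finset.mem_univ j))
    set A := Finset.univ.sup fun j => γ i j (σ' j rr + δ₂ j (σ' j rr)) with hAdef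
    rcases le_total (γu i v) (δ₁ i A) with hc | hc
    · rcases eq_zero_or_pos rr with hr0 | hrpos
      · have hA0 : A = 0 := by
          refine le_antisymm (Finset.sup_le fun j _ => ?_) (zero_le)
          rw [hr0, (hσ j).1.2.2, (hδ₂ j).1.2.2, add_zero, hγ0 i j]
        have hVi0 : V i (sol G ξ u M i) = 0 := by
          refine le_antisymm ?_ (zero_le)
          calc V i (sol G ξ u M i) ≤ A + γu i v := hVi
          _ ≤ A + δ₁ i A := add_le_add_right hc _
          _ = 0 := by rw [hA0, (hδ₁ i).1.2.2, add_zero]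
        rw [hVi0, (hd₂invK i).1.2.2, (hσinvK i).1.2.2]
        exact zero_le
      · have hlt : V i (sol G ξ u M i) < σ' i rr := by
          calc V i (sol G ξ u M i) ≤ A + γu i v := hVi
          _ ≤ A + δ₁ i A := add_le_add_right hc _
          _ < σ' i rr := hpath i rr hrpos
        refine le_trans ((hgK i).1.2.1.monotone hlt.le) ?_
        refine le_trans (Finset.le_sup (f := fun i => σinv i (d₂inv i (σ' i rr)))
          (Finset.mem_univ i)) ?_
        exact le_add_right le_rfl
    · have hA : A ≤ δ₁inv i (γu i v) := by
        have h5 : δ₁ i A ≤ δ₁ i (δ₁inv i (γu i v)) := by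
          rw [hδ₁R i _]; exact hc
        exact ((hδ₁ i).1.2.1.le_iff_le).1 h5
      have h6 : V i (sol G ξ u M i) ≤ δ₁inv i (γu i v) + γu i v :=
        le_trans hVi (add_le_add_left hA _)
      refine le_trans ((hgK i).1.2.1.monotone h6) ?_
      refine le_trans (Finset.le_sup
        (f := fun i => σinv i (d₂inv i (δ₁inv i (γu i v) + γu i v))) (Finset.mem_univ i)) ?_
      exact le_trans le_add_self (le_add_self)
  have hLyap : DissFinStepLyapAt G
      (fun ξ => Finset.univ.sup fun i => σinv i (d₂inv i (V i (ξ i)))) M := by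
    refine ⟨⟨α₁W, α₂W, hα₁WK, hα₂WK, hWbnd⟩, hM, σf, ρf, hσfK, hρfPD, ?_, hWdec⟩
    have : (fun s => s - ρf s) = ηf := funext hρη
    rw [this]
    exact hηfK
  refine ⟨hLyap, ?_⟩
  exact SGaux.iss_of_finstep G hG M hM _ α₁W α₂W hα₁WK hα₂WK hWbnd ρf σf
    hρfK.1.1 hρfK.1.2.1.monotone hρfle ηf hηfK hρη hσfK hWdec
end

section
/- (Exponential ISS small-gain corollary, maximization form.) Suppose G is globally K-bounded with linear first bound ω₁ (i.e. ‖G(ξ,μ)‖ ≤ w₁‖ξ‖ + ω₂(‖μ‖) with w₁ > 0, ω₂ ∈ K), and the system is the interconnection of N subsystems. Assume there exist M ∈ ℕ, M ≥ 1, constants cᵢⱼ > 0 defining linear gains γᵢⱼ(s) = cᵢⱼ s, functions γᵢᵤ of class K or identically zero, and functions Vᵢ : ℝ^{nᵢ} → [0,∞) with linear bounds aᵢ‖ξᵢ‖ ≤ Vᵢ(ξᵢ) ≤ bᵢ‖ξᵢ‖ (0 < aᵢ ≤ bᵢ) for all ξᵢ, such that: (1) for every i, every ξ ∈ ℝⁿ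 and every bounded input u, Vᵢ(xᵢ(M,ξ,u)) ≤ max{ max_{j} cᵢⱼ Vⱼ(ξⱼ), γᵢᵤ(‖u‖∞) }; and (2) the map Γ⊕ with entries γᵢⱼ satisfies the small-gain condition. Then the overall system is exponentially ISS. -/
open scoped NNReal

variable {E F : Type*} [NormedAddCommGroup E] [NormedAddCommGroup F]

lemma sg_mu {N : ℕ} :
    ∀ (n : ℕ) (S : Finset (Fin N)) (c : Fin N → Fin N → ℝ≥0),
      S.card = n → (∀ i j, 0 < c i j) →
      (∀ s : Fin N → ℝ≥0, (∃ i ∈ S, s i ≠ 0) →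
        ∃ i ∈ S, (S.sup fun j => c i j * s j) < s i) →
      ∃ μ : Fin N → ℝ≥0, (∀ i, 0 < μ i) ∧ ∀ i ∈ S, (S.sup fun j => c i j * μ j) < μ i := by
  intro n
  induction n with
  | zero =>
    intro S c hcard _ _
    exact ⟨fun _ => 1, fun _ => one_pos, fun i hi => absurd (Finset.card_eq_zero.1 hcard ▸ hi) (Finset.notMem_empty i)⟩
  | succ n ih =>
    intro S c hcard hc hsg
    have hSne : S.Nonempty := Finset.card_pos.1 (hcard ▸ n.succ_pos)
    obtain ⟨i₀, hi₀S, hi₀⟩ := hsg (fun j => if j ∈ S then 1 else 0)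
      ⟨hSne.choose, hSne.choose_spec, by simp [hSne.choose_spec]⟩
    rw [if_pos hi₀S] at hi₀
    have hrow : ∀ j ∈ S, c i₀ j < 1 := by
      intro j hj
      calc c i₀ j = c i₀ j * (if j ∈ S then 1 else 0) := by rw [if_pos hj, mul_one]
        _ ≤ _ := Finset.le_sup (f := fun j => c i₀ j * if j ∈ S then 1 else 0) hj
        _ < 1 := hi₀
    have hdiag : c i₀ i₀ < 1 := hrow i₀ hi₀S
    set S' : Finset (Fin N) := S.erase i₀ with hS'
    have hS'card : S'.card = n := by
      rw [hS', Finset.card_erase_of_mem hi₀S, hcard]; rfl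
    have hins : insert i₀ S' = S := Finset.insert_erase hi₀S
    set c' : Fin N → Fin N → ℝ≥0 := fun i j => max (c i j) (c i i₀ * c i₀ j) with hc'
    have hc'pos : ∀ i j, 0 < c' i j := fun i j => lt_of_lt_of_le (hc i j) le_sup_left
    have hsg' : ∀ s : Fin N → ℝ≥0, (∃ i ∈ S', s i ≠ 0) →
        ∃ i ∈ S', (S'.sup fun j => c' i j * s j) < s i := by
      intro s' ⟨iw, hiwS', hiw⟩
      set s : Fin N → ℝ≥0 := fun j => if j = i₀ then S'.sup (fun k => c i₀ k * s' k) else s' j with hs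
      have hsS' : ∀ j ∈ S', s j = s' j := by
        intro j hj; rw [hs]; simp [Finset.ne_of_mem_erase hj]
      have hsi₀ : s i₀ = S'.sup (fun k => c i₀ k * s' k) := by rw [hs]; simp
      obtain ⟨i, hiS, hi⟩ := hsg s ⟨iw, Finset.mem_of_mem_erase hiwS', by rw [hsS' iw hiwS']; exact hiw⟩
      have hii₀ : i ≠ i₀ := by
        intro h
        refine absurd hi (not_lt.2 ?_)
        rw [h, hsi₀]
        refine Finset.sup_le fun k hk => ?_
        calc c i₀ k * s' k = c i₀ k * s k := by rw [hsS' k hk]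
          _ ≤ _ := Finset.le_sup (f := fun j => c i₀ j * s j) (Finset.mem_of_mem_erase hk)
      have hiS'' : i ∈ S' := Finset.mem_erase.2 ⟨hii₀, hiS⟩
      refine ⟨i, hiS'', ?_⟩
      have hle : (S'.sup fun j => c' i j * s j) ≤ S.sup fun j => c i j * s j := by
        refine Finset.sup_le fun j hj => ?_
        rw [hc']
        rw [max_mul_of_nonneg _ _ zero_le]
        refine max_le (Finset.le_sup (f := fun j => c i j * s j) (Finset.mem_of_mem_erase hj)) ?_
        have h1 : c i₀ j * s j ≤ s i₀ := by
          rw [hsi₀, hsS' j hj]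
          exact Finset.le_sup (f := fun k => c i₀ k * s' k) hj
        calc c i i₀ * c i₀ j * s j = c i i₀ * (c i₀ j * s j) := by ring
          _ ≤ c i i₀ * s i₀ := mul_le_mul_right h1 _
          _ ≤ _ := Finset.le_sup (f := fun j => c i j * s j) hi₀S
      have heq : (S'.sup fun j => c' i j * s' j) = S'.sup fun j => c' i j * s j :=
        Finset.sup_congr rfl (fun j hj => by rw [hsS' j hj])
      rw [heq, ← hsS' i hiS'']
      exact lt_of_le_of_lt hle hi
    obtain ⟨μ', hμ'pos, hμ'⟩ := ih S' c' hS'card hc'pos hsg'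
    rcases Finset.eq_empty_or_nonempty S' with hS'emp | hS'ne
    · refine ⟨fun _ => 1, fun _ => one_pos, fun i hi => ?_⟩
      have hieq : i = i₀ := by
        by_contra hne
        have h' : i ∈ S' := Finset.mem_erase.2 ⟨hne, hi⟩
        rw [hS'emp] at h'
        exact absurd h' (Finset.notMem_empty i)
      subst hieq
      rw [← hins, hS'emp, Finset.sup_insert, Finset.sup_empty]
      simpa using hdiag
    · set m : ℝ≥0 := S'.sup (fun k => c i₀ k * μ' k) with hm
      have hmpos : 0 < m := by
        obtain ⟨k, hk⟩ := hS'ne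
        exact lt_of_lt_of_le (mul_pos (hc i₀ k) (hμ'pos k))
          (Finset.le_sup (f := fun k => c i₀ k * μ' k) hk)
      set ρ : ℝ≥0 := max (c i₀ i₀) (S'.sup fun i => (S'.sup fun j => c' i j * μ' j) / μ' i) with hρ
      have hρ1 : ρ < 1 := by
        rw [hρ, max_lt_iff]
        refine ⟨hdiag, ?_⟩
        refine Finset.sup_lt_iff (by norm_num) |>.2 fun i hi => ?_
        exact (div_lt_one (hμ'pos i)).2 (hμ' i hi)
      have hT'ρ : ∀ i ∈ S', (S'.sup fun j => c' i j * μ' j) ≤ ρ * μ' i := by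
        intro i hi
        have h1 : (S'.sup fun j => c' i j * μ' j) = ((S'.sup fun j => c' i j * μ' j) / μ' i) * μ' i :=
          (div_mul_cancel₀ _ (hμ'pos i).ne').symm
        rw [h1]
        refine mul_le_mul_left (le_trans ?_ (le_max_right _ _)) _
        exact Finset.le_sup (f := fun i => (S'.sup fun j => c' i j * μ' j) / μ' i) hi
      set t : ℝ≥0 := 2 / (1 + ρ) with ht
      have ht1 : 1 < t := by
        rw [ht, lt_div_iff₀ (by positivity), one_mul]
        calc 1 + ρ < 1 + 1 := add_lt_add_right hρ1 1
          _ = 2 := by norm_num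
      have htρ : t * ρ < 1 := by
        rw [ht, div_mul_eq_mul_div, div_lt_one (by positivity)]
        calc 2 * ρ = ρ + ρ := two_mul ρ
          _ < 1 + ρ := add_lt_add_left hρ1 ρ
      set μ : Fin N → ℝ≥0 := fun j => if j = i₀ then t * m else μ' j with hμdef
      have hμpos : ∀ i, 0 < μ i := by
        intro i; rw [hμdef]
        by_cases h : i = i₀ <;> simp [h, hmpos, hμ'pos i, lt_trans one_pos ht1, mul_pos]
      refine ⟨μ, hμpos, fun i hi => ?_⟩
      have hsup : (S.sup fun j => c i j * μ j) =
          max (c i i₀ * (t * m)) (S'.sup fun j => c i j * μ' j) := by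
        rw [← hins, Finset.sup_insert]
        congr 1
        · rw [hμdef]; simp
        · exact Finset.sup_congr rfl fun j hj => by
            rw [hμdef]; simp [Finset.ne_of_mem_erase hj]
      by_cases hii : i = i₀
      · have hμi : μ i = t * m := by rw [hμdef]; simp [hii]
        rw [hsup, hμi, max_lt_iff, hii]
        constructor
        · calc c i₀ i₀ * (t * m) ≤ ρ * (t * m) := by
                refine mul_le_mul_left ?_ _
                exact le_trans (le_max_left _ _) le_rfl
            _ = (t * ρ) * m := by ring
            _ < 1 * m := mul_lt_mul_of_pos_right htρ hmpos
            _ = m := one_mul m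
            _ ≤ t * m := le_mul_of_one_le_left zero_le ht1.le
        · calc (S'.sup fun j => c i₀ j * μ' j) ≤ m := le_rfl
            _ < t * m := lt_mul_of_one_lt_left hmpos ht1
      · have hiS' : i ∈ S' := Finset.mem_erase.2 ⟨hii, hi⟩
        have hμi : μ i = μ' i := by rw [hμdef]; simp [hii]
        rw [hsup, hμi, max_lt_iff]
        constructor
        · obtain ⟨k, hkS', hkeq⟩ := Finset.exists_mem_eq_sup S' hS'ne (fun k => c i₀ k * μ' k)
          have h2 : c i i₀ * m ≤ S'.sup fun j => c' i j * μ' j := by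
            rw [hm, hkeq, ← mul_assoc]
            refine le_trans (mul_le_mul_left ?_ (μ' k))
              (Finset.le_sup (f := fun j => c' i j * μ' j) hkS')
            exact le_max_right _ _
          calc c i i₀ * (t * m) = t * (c i i₀ * m) := by ring
            _ ≤ t * (ρ * μ' i) := mul_le_mul_right (le_trans h2 (hT'ρ i hiS')) t
            _ = (t * ρ) * μ' i := by ring
            _ < 1 * μ' i := mul_lt_mul_of_pos_right htρ (hμ'pos i)
            _ = μ' i := one_mul _
        · calc (S'.sup fun j => c i j * μ' j) ≤ S'.sup fun j => c' i j * μ' j :=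
              Finset.sup_mono_fun fun j hj => mul_le_mul_left (le_max_left _ _) _
            _ < μ' i := hμ' i hiS'

section helpers
variable {E F : Type*} [NormedAddCommGroup E] [NormedAddCommGroup F]

omit [NormedAddCommGroup E] in
lemma sol_shift (G : E → F → E) (ξ : E) (u : ℕ → F) (t0 : ℕ) :
    ∀ m, sol G ξ u (t0 + m) = sol G (sol G ξ u t0) (fun t => u (t0 + t)) m := by
  intro m
  induction m with
  | zero => rfl
  | succ m ihm => rw [← Nat.add_assoc]; simp only [sol, ihm]

end helpers

/-- Exponential ISS small-gain corollary, maximization form. -/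
theorem exp_small_gain_max
    {N : ℕ} (hN : 0 < N)
    {E : Fin N → Type*} [∀ i, NormedAddCommGroup (E i)]
    [∀ i, NormedSpace ℝ (E i)] [∀ i, FiniteDimensional ℝ (E i)]
    {F : Type*} [NormedAddCommGroup F] [NormedSpace ℝ F] [FiniteDimensional ℝ F]
    (G : (∀ i, E i) → F → (∀ i, E i))
    -- G globally K-bounded with linear first bound
    (w₁ : ℝ≥0) (hw₁ : 0 < w₁) (ω₂ : ℝ≥0 → ℝ≥0) (hω₂ : ClassK ω₂)
    (hbound : ∀ ξ μ, ‖G ξ μ‖₊ ≤ w₁ * ‖ξ‖₊ + ω₂ ‖μ‖₊)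
    (M : ℕ) (hM : 1 ≤ M)
    (c : Fin N → Fin N → ℝ≥0) (hc : ∀ i j, 0 < c i j)
    (γu : Fin N → ℝ≥0 → ℝ≥0)
    (hγu : ∀ i, ClassK (γu i) ∨ γu i = fun _ => 0)
    (a b : Fin N → ℝ≥0) (ha : ∀ i, 0 < a i) (hab : ∀ i, a i ≤ b i)
    (V : ∀ i, E i → ℝ≥0)
    (hV : ∀ (i : Fin N) (ξi : E i), a i * ‖ξi‖₊ ≤ V i ξi ∧ V i ξi ≤ b i * ‖ξi‖₊)
    -- (1) finite-step decrease in maximization form with linear gains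
    (hdec : ∀ (i : Fin N) (ξ : ∀ i, E i) (u : ℕ → F), BddInput u →
      V i (sol G ξ u M i) ≤
        max (Finset.univ.sup fun j => c i j * V j (ξ j)) (γu i (supNorm u)))
    -- (2) small-gain condition
    (hsg : ∀ s : Fin N → ℝ≥0, s ≠ 0 →
      ∃ i, (Finset.univ.sup fun j => c i j * s j) < s i) :
    ExpISS G := by
  classical
  obtain ⟨hω₂c, hω₂sm, hω₂z⟩ := hω₂
  have hω₂ : Continuous ω₂ ∧ StrictMono ω₂ ∧ ω₂ 0 = 0 := ⟨hω₂c, hω₂sm, hω₂z⟩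
  have hγu : ∀ i, (Continuous (γu i) ∧ StrictMono (γu i) ∧ γu i 0 = 0) ∨ γu i = fun _ => 0 :=
    fun i => (hγu i).elim (fun h => Or.inl h) Or.inr
  have hsg' : ∀ s : Fin N → ℝ≥0, (∃ i ∈ Finset.univ, s i ≠ 0) →
      ∃ i ∈ (Finset.univ : Finset (Fin N)), ((Finset.univ : Finset (Fin N)).sup fun j => c i j * s j) < s i := by
    intro s hs
    obtain ⟨i, _, hi⟩ := hs
    obtain ⟨i', h'⟩ := hsg s (fun h => hi (by rw [h]; rfl))
    exact ⟨i', Finset.mem_univ _, h'⟩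
  obtain ⟨μ, hμpos, hμ⟩ := sg_mu (Finset.univ.card) Finset.univ c rfl hc hsg'
  show ∃ (C κ : ℝ≥0) (γ : ℝ≥0 → ℝ≥0), 1 ≤ C ∧ κ < 1 ∧
    (Continuous γ ∧ StrictMono γ ∧ γ 0 = 0) ∧
    ∀ ξ u, BddInput u → ∀ k : ℕ, ‖sol G ξ u k‖₊ ≤ C * κ ^ k * ‖ξ‖₊ + γ (supNorm u)
  classical
  -- contraction factor
  set T : (Fin N → ℝ≥0) → Fin N → ℝ≥0 := fun s i => Finset.univ.sup fun j => c i j * s j with hT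
  set r : ℝ≥0 := max (1/2) (Finset.univ.sup fun i => T μ i / μ i) with hrdef
  have hr1 : r < 1 := by
    rw [hrdef, max_lt_iff]
    refine ⟨by rw [one_div]; exact inv_lt_one_of_one_lt₀ one_lt_two, Finset.sup_lt_iff (by norm_num) |>.2 fun i _ => ?_⟩
    exact (div_lt_one (hμpos i)).2 (hμ i (Finset.mem_univ i))
  have hr0 : 0 < r := lt_of_lt_of_le (by norm_num) (le_max_left _ _)
  have hTμ : ∀ i, T μ i ≤ r * μ i := by
    intro i
    have h1 : T μ i = (T μ i / μ i) * μ i := (div_mul_cancel₀ _ (hμpos i).ne').symm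
    rw [h1]
    refine mul_le_mul_left (le_trans ?_ (le_max_right _ _)) _
    exact Finset.le_sup (f := fun i => T μ i / μ i) (Finset.mem_univ i)
  -- helpers
  have hγmono : ∀ i, Monotone (γu i) := fun i =>
    (hγu i).elim (fun h => h.2.1.monotone) (fun h => by rw [h]; exact monotone_const)
  have hω₂mono : Monotone ω₂ := hω₂.2.1.monotone
  set Minv : ℝ≥0 := Finset.univ.sup fun i => (μ i)⁻¹ with hMinv
  have hMinvμ : ∀ (X : ℝ≥0) i, X ≤ (X * Minv) * μ i := by
    intro X i
    calc X = X * ((μ i)⁻¹ * μ i) := by rw [inv_mul_cancel₀ (hμpos i).ne', mul_one]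
      _ = X * (μ i)⁻¹ * μ i := by ring
      _ ≤ X * Minv * μ i := by
          refine mul_le_mul_left (mul_le_mul_right ?_ X) _
          exact Finset.le_sup (f := fun i => (μ i)⁻¹) (Finset.mem_univ i)
  set Ainv : ℝ≥0 := Finset.univ.sup fun i => (a i)⁻¹ with hAinv
  set Bc : ℝ≥0 := Finset.univ.sup b with hBc
  set Mx : ℝ≥0 := Finset.univ.sup μ with hMx
  set Bp : ℝ≥0 := max 1 w₁ with hBp
  have hBp1 : 1 ≤ Bp := le_max_left _ _
  -- step bound for T on combinations A μ ⊔ B μ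
  have hTstep : ∀ (A B' : ℝ≥0) (i : Fin N),
      (Finset.univ.sup fun j => c i j * ((A * μ j) ⊔ (B' * μ j))) ≤
        A * (r * μ i) ⊔ B' * (r * μ i) := by
    intro A B' i
    refine Finset.sup_le fun j _ => ?_
    rw [mul_max_of_nonneg _ _ zero_le]
    have h1 : c i j * (A * μ j) ≤ A * (r * μ i) := by
      calc c i j * (A * μ j) = A * (c i j * μ j) := by ring
        _ ≤ A * T μ i := mul_le_mul_right (Finset.le_sup (f := fun j => c i j * μ j) (Finset.mem_univ j)) A
        _ ≤ A * (r * μ i) := mul_le_mul_right (hTμ i) A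
    have h2 : c i j * (B' * μ j) ≤ B' * (r * μ i) := by
      calc c i j * (B' * μ j) = B' * (c i j * μ j) := by ring
        _ ≤ B' * T μ i := mul_le_mul_right (Finset.le_sup (f := fun j => c i j * μ j) (Finset.mem_univ j)) B'
        _ ≤ B' * (r * μ i) := mul_le_mul_right (hTμ i) B'
    exact max_le_max h1 h2
  -- exponent base
  set κ : ℝ≥0 := r ^ ((1:ℝ)/M) with hκ
  have hMne : (M:ℝ) ≠ 0 := by positivity
  have hκM : κ ^ M = r := by
    rw [hκ, ← NNReal.rpow_natCast (r ^ ((1:ℝ)/M)) M, ← NNReal.rpow_mul,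
      one_div, inv_mul_cancel₀ hMne, NNReal.rpow_one]
  have hκ1 : κ < 1 := NNReal.rpow_lt_one hr1 (by positivity)
  -- constants
  set C₁ : ℝ≥0 := Ainv * (Bc * Minv * Mx) with hC₁
  set C₂ : ℝ≥0 := Ainv * (Minv * Mx) with hC₂
  set C : ℝ≥0 := max 1 (Bp ^ M * C₁ * r⁻¹) with hC
  set γf : ℝ≥0 → ℝ≥0 := fun s => (Bp ^ M * C₂) * (∑ i, γu i s) + ((M : ℝ≥0) * Bp ^ M) * ω₂ s with hγf
  refine ⟨C, κ, γf, le_max_left _ _, hκ1, ?_, ?_⟩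
  · refine ⟨?_, ?_, ?_⟩
    · refine Continuous.add (Continuous.mul continuous_const ?_) (Continuous.mul continuous_const hω₂.1)
      exact continuous_finset_sum _ fun i _ => (hγu i).elim (fun h => h.1) (fun h => by rw [h]; exact continuous_const)
    · intro x y hxy
      have h1 : (∑ i, γu i x) ≤ ∑ i, γu i y := Finset.sum_le_sum fun i _ => hγmono i hxy.le
      have h2 : ((M : ℝ≥0) * Bp ^ M) * ω₂ x < ((M : ℝ≥0) * Bp ^ M) * ω₂ y := by
        refine mul_lt_mul_of_pos_left (hω₂.2.1 hxy) ?_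
        have : (0:ℝ≥0) < M := by exact_mod_cast Nat.lt_of_lt_of_le Nat.zero_lt_one hM
        positivity
      exact add_lt_add_of_le_of_lt (mul_le_mul_right h1 _) h2
    · have h0 : ∀ i, γu i 0 = 0 := fun i => (hγu i).elim (fun h => h.2.2) (fun h => by rw [h])
      simp [hγf, h0, hω₂.2.2]
  · intro ξ u hu k
    set U : ℝ≥0 := supNorm u with hU
    set g : Fin N → ℝ≥0 := fun i => γu i U with hg
    set Gm : ℝ≥0 := Finset.univ.sup g with hGm
    set v : ℕ → Fin N → ℝ≥0 := fun k i => V i (sol G ξ u (k * M) i) with hv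
    -- one-step recursion for v
    have hvrec : ∀ k i, v (k+1) i ≤ (Finset.univ.sup fun j => c i j * v k j) ⊔ g i := by
      intro k i
      have hshift := sol_shift G ξ u (k*M) M
      have h1 := hdec i (sol G ξ u (k*M)) (fun t => u (k*M + t))
        (BddAbove.mono (by rintro x ⟨t, rfl⟩; exact ⟨k*M + t, rfl⟩) hu)
      rw [← hshift] at h1
      have h2 : v (k+1) i = V i (sol G ξ u (k*M + M) i) := by
        rw [hv]; congr 2; ring
      rw [h2]
      refine le_trans h1 (max_le_max le_rfl ?_)
      exact hγmono i (ciSup_le fun t => le_ciSup hu (k*M + t))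
    -- main decay estimate
    set Λ : ℝ≥0 := (Bc * ‖ξ‖₊) * Minv with hΛ
    set gH : ℝ≥0 := Gm * Minv with hgH
    have hmain : ∀ k i, v k i ≤ (r ^ k * Λ) * μ i ⊔ gH * μ i := by
      intro k
      induction k with
      | zero =>
        intro i
        refine le_trans ?_ (le_max_left _ _)
        rw [pow_zero, one_mul]
        refine le_trans ?_ (hMinvμ (Bc * ‖ξ‖₊) i)
        calc v 0 i ≤ b i * ‖ξ i‖₊ := by
              have := (hV i (ξ i)).2
              simpa [hv, sol] using this
          _ ≤ Bc * ‖ξ‖₊ := by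
              refine mul_le_mul' (Finset.le_sup (Finset.mem_univ i)) ?_
              rw [Pi.nnnorm_def]
              exact Finset.le_sup (f := fun i => ‖ξ i‖₊) (Finset.mem_univ i)
      | succ k ihk =>
        intro i
        refine le_trans (hvrec k i) ?_
        have h1 : (Finset.univ.sup fun j => c i j * v k j) ≤
            (r ^ k * Λ) * (r * μ i) ⊔ gH * (r * μ i) := by
          refine le_trans (Finset.sup_mono_fun fun j _ => mul_le_mul_right (ihk j) (c i j)) ?_
          exact hTstep (r ^ k * Λ) gH i
        refine max_le ?_ ?_
        · refine le_trans h1 (max_le_max ?_ ?_)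
          · calc (r ^ k * Λ) * (r * μ i) = (r ^ (k+1) * Λ) * μ i := by ring
              _ ≤ _ := le_rfl
          · calc gH * (r * μ i) ≤ gH * (1 * μ i) :=
                  mul_le_mul_right (mul_le_mul_left hr1.le _) gH
              _ = gH * μ i := by rw [one_mul]
        · refine le_trans ?_ (le_max_right _ _)
          calc g i ≤ Gm := Finset.le_sup (Finset.mem_univ i)
            _ ≤ gH * μ i := hMinvμ Gm i
    -- bound on the norm at multiples of M
    have hnormM : ∀ q : ℕ, ‖sol G ξ u (q * M)‖₊ ≤ C₁ * r ^ q * ‖ξ‖₊ + C₂ * Gm := by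
      intro q
      rw [Pi.nnnorm_def]
      refine Finset.sup_le fun i _ => ?_
      have h1 : ‖sol G ξ u (q * M) i‖₊ ≤ (a i)⁻¹ * v q i := by
        calc ‖sol G ξ u (q * M) i‖₊
            = (a i)⁻¹ * (a i * ‖sol G ξ u (q * M) i‖₊) := by
              rw [← mul_assoc, inv_mul_cancel₀ (ha i).ne', one_mul]
          _ ≤ (a i)⁻¹ * v q i := mul_le_mul_right (hV i _).1 _
      refine le_trans h1 ?_
      have h2 : (a i)⁻¹ * v q i ≤ Ainv * ((r ^ q * Λ) * μ i + gH * μ i) := by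
        refine mul_le_mul' (Finset.le_sup (f := fun i => (a i)⁻¹) (Finset.mem_univ i)) ?_
        exact le_trans (hmain q i) (max_le (le_add_right le_rfl) (le_add_left le_rfl))
      refine le_trans h2 ?_
      have hμMx : μ i ≤ Mx := Finset.le_sup (Finset.mem_univ i)
      calc Ainv * ((r ^ q * Λ) * μ i + gH * μ i)
          ≤ Ainv * ((r ^ q * Λ) * Mx + gH * Mx) := by
            refine mul_le_mul_right (add_le_add ?_ ?_) Ainv <;>
              exact mul_le_mul_right hμMx _
        _ = C₁ * r ^ q * ‖ξ‖₊ + C₂ * Gm := by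
            rw [hC₁, hC₂, hΛ, hgH]; ring
    -- interpolation between multiples of M
    have hinter : ∀ t s : ℕ, ‖sol G ξ u (t + s)‖₊ ≤
        Bp ^ s * ‖sol G ξ u t‖₊ + ((s : ℝ≥0) * Bp ^ s) * ω₂ U := by
      intro t s
      induction s with
      | zero => simp
      | succ s ihs =>
        have hstep : ‖sol G ξ u (t + (s+1))‖₊ ≤ w₁ * ‖sol G ξ u (t + s)‖₊ + ω₂ U := by
          have : sol G ξ u (t + (s+1)) = G (sol G ξ u (t+s)) (u (t+s)) := by
            rw [← Nat.add_assoc]; rfl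
          rw [this]
          refine le_trans (hbound _ _) (add_le_add_right ?_ _)
          exact hω₂mono (le_ciSup hu (t+s))
        push_cast
        refine le_trans hstep ?_
        calc w₁ * ‖sol G ξ u (t + s)‖₊ + ω₂ U
            ≤ Bp * (Bp ^ s * ‖sol G ξ u t‖₊ + ((s:ℝ≥0) * Bp ^ s) * ω₂ U) + ω₂ U := by
              refine add_le_add_left (mul_le_mul' (le_max_right _ _) ihs) _
          _ = Bp ^ (s+1) * ‖sol G ξ u t‖₊ + (((s:ℝ≥0) * Bp ^ (s+1)) * ω₂ U + ω₂ U) := by ring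
          _ ≤ Bp ^ (s+1) * ‖sol G ξ u t‖₊ + (((s:ℝ≥0)+1) * Bp ^ (s+1)) * ω₂ U := by
              refine add_le_add_right ?_ _
              have h1 : ω₂ U ≤ Bp ^ (s+1) * ω₂ U := le_mul_of_one_le_left zero_le (le_trans hBp1 (le_self_pow₀ hBp1 (Nat.succ_ne_zero s)))
              calc ((s:ℝ≥0) * Bp ^ (s+1)) * ω₂ U + ω₂ U
                  ≤ ((s:ℝ≥0) * Bp ^ (s+1)) * ω₂ U + Bp ^ (s+1) * ω₂ U := add_le_add_right h1 _
                _ = (((s:ℝ≥0)+1) * Bp ^ (s+1)) * ω₂ U := by ring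
    -- assemble
    set q : ℕ := k / M with hq
    set s : ℕ := k % M with hs
    have hks : k = q * M + s := by rw [hq, hs, Nat.mul_comm]; exact (Nat.div_add_mod k M).symm
    have hsM : s ≤ M := (Nat.mod_lt k (Nat.lt_of_lt_of_le Nat.zero_lt_one hM)).le
    have hkle : k ≤ (q+1) * M := by
      rw [hks]; calc q * M + s ≤ q * M + M := by omega
        _ = (q+1) * M := by ring
    have hrq : r ^ q ≤ r⁻¹ * κ ^ k := by
      have h1 : κ ^ ((q+1) * M) ≤ κ ^ k := pow_le_pow_of_le_one zero_le hκ1.le hkle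
      have h2 : κ ^ ((q+1) * M) = r ^ (q+1) := by
        rw [Nat.mul_comm, pow_mul, hκM]
      have h3 : r ^ q = r⁻¹ * r ^ (q+1) := by
        rw [pow_succ', ← mul_assoc, inv_mul_cancel₀ hr0.ne', one_mul]
      rw [h3]
      exact mul_le_mul_right (h2 ▸ h1) _
    calc ‖sol G ξ u k‖₊ = ‖sol G ξ u (q * M + s)‖₊ := by rw [← hks]
      _ ≤ Bp ^ s * ‖sol G ξ u (q * M)‖₊ + ((s : ℝ≥0) * Bp ^ s) * ω₂ U := hinter (q*M) s
      _ ≤ Bp ^ M * (C₁ * r ^ q * ‖ξ‖₊ + C₂ * Gm) + ((M : ℝ≥0) * Bp ^ M) * ω₂ U := by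
          refine add_le_add ?_ ?_
          · exact mul_le_mul' (pow_le_pow_right₀ hBp1 hsM) (hnormM q)
          · refine mul_le_mul_left (mul_le_mul' (by exact_mod_cast hsM) (pow_le_pow_right₀ hBp1 hsM)) _
      _ ≤ (Bp ^ M * C₁ * r⁻¹) * κ ^ k * ‖ξ‖₊ + ((Bp ^ M * C₂) * Gm + ((M : ℝ≥0) * Bp ^ M) * ω₂ U) := by
          have h1 : Bp ^ M * (C₁ * r ^ q * ‖ξ‖₊) ≤ (Bp ^ M * C₁ * r⁻¹) * κ ^ k * ‖ξ‖₊ := by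
            calc Bp ^ M * (C₁ * r ^ q * ‖ξ‖₊) = (Bp ^ M * C₁) * r ^ q * ‖ξ‖₊ := by ring
              _ ≤ (Bp ^ M * C₁) * (r⁻¹ * κ ^ k) * ‖ξ‖₊ := by
                  exact mul_le_mul_left (mul_le_mul_right hrq _) _
              _ = (Bp ^ M * C₁ * r⁻¹) * κ ^ k * ‖ξ‖₊ := by ring
          calc Bp ^ M * (C₁ * r ^ q * ‖ξ‖₊ + C₂ * Gm) + ((M : ℝ≥0) * Bp ^ M) * ω₂ U
              = Bp ^ M * (C₁ * r ^ q * ‖ξ‖₊) + ((Bp ^ M * C₂) * Gm + ((M : ℝ≥0) * Bp ^ M) * ω₂ U) := by ring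
            _ ≤ _ := add_le_add_left h1 _
      _ ≤ C * κ ^ k * ‖ξ‖₊ + γf U := by
          refine add_le_add (mul_le_mul_left (mul_le_mul_left (le_max_right _ _) _) _) ?_
          rw [hγf]
          refine add_le_add_left (mul_le_mul_right ?_ _) _
          refine Finset.sup_le fun i _ => ?_
          exact Finset.single_le_sum (f := fun i => γu i U) (fun _ _ => zero_le) (Finset.mem_univ i)
end

section
/- (Exponential ISS small-gain corollary, summation form.) Suppose G is globally K-bounded with linear first bound ω₁ (i.e. ‖G(ξ,μ)‖ ≤ w₁‖ξ‖ + ω₂(‖μ‖) with w₁ > 0, ω₂ ∈ K), and the system is the interconnection of N subsystems. Assume there exist M ∈ ℕ, M ≥ 1, constants cᵢⱼ > 0 defining linear gains γᵢⱼ(s) = cᵢⱼ s, functions γᵢᵤ of class K or identically zero, and functions Vᵢ : ℝ^{nᵢ} → [0,∞) with linear bounds aᵢ‖ξᵢ‖ ≤ Vᵢ(ξᵢ) ≤ bᵢ‖ξᵢ‖ (0 < aᵢ ≤ bᵢ) for all ξᵢ, such that: (1) for every i, every ξ ∈ ℝⁿ and every bounded input u, Vᵢ(xᵢ(M,ξ,u))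 ≤ max_{j} cᵢⱼ Vⱼ(ξⱼ) + γᵢᵤ(‖u‖∞); and (2) the map Γ⊕ with entries γᵢⱼ satisfies the small-gain condition. Then the overall system is exponentially ISS. -/
open scoped NNReal

variable {E F : Type*} [NormedAddCommGroup E] [NormedAddCommGroup F]

section SGAuxSection
open scoped ENNReal
open Filter Topology

namespace SGAux

variable {ι : Type*}

lemma mul_finset_sup_nnreal (s : Finset ι) (f : ι → ℝ≥0) (t : ℝ≥0) :
    t * s.sup f = s.sup fun i => t * f i := by
  have hm : Monotone (fun x : ℝ≥0 => t * x) := fun x y h => mul_le_mul_right h t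
  exact Finset.comp_sup_eq_sup_comp _ (fun x y => by
    simpa using hm.map_max (a := x) (b := y)) (by simp)

lemma mul_finset_sup_ennreal (s : Finset ι) (f : ι → ℝ≥0∞) (t : ℝ≥0∞) :
    t * s.sup f = s.sup fun i => t * f i := by
  have hm : Monotone (fun x : ℝ≥0∞ => t * x) := fun x y h => mul_le_mul_right h t
  exact Finset.comp_sup_eq_sup_comp _ (fun x y => by
    simpa using hm.map_max (a := x) (b := y)) (by simp)

lemma limsup_finset_sup (s : Finset ι) (F : ι → ℕ → ℝ≥0∞) :
    limsup (fun k => s.sup fun i => F i k) atTop = s.sup fun i => limsup (F i) atTop := by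
  classical
  induction s using Finset.induction with
  | empty => simpa using limsup_const (α := ℕ) (f := atTop) (⊥ : ℝ≥0∞)
  | insert _ _ hnot ih =>
      rename_i a s
      simp only [Finset.sup_insert]
      rw [← ih]
      simpa using limsup_max (f := atTop)
        (u := fun k => F a k) (v := fun k => s.sup fun i => F i k)

lemma small_gain_weights {N : ℕ} (hN : 0 < N) (c : Fin N → Fin N → ℝ≥0)
    (hc : ∀ i j, 0 < c i j)
    (hsg : ∀ s : Fin N → ℝ≥0, s ≠ 0 →
      ∃ i, (Finset.univ.sup fun j => c i j * s j) < s i) :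
    ∃ (lam : Fin N → ℝ≥0) (r : ℝ≥0), 0 < r ∧ r < 1 ∧ (∀ i, 1 ≤ lam i) ∧
      ∀ i, (Finset.univ.sup fun j => c i j * lam j) ≤ r * lam i := by
  haveI : Nonempty (Fin N) := ⟨⟨0, hN⟩⟩
  classical
  set Γ : (Fin N → ℝ≥0) → (Fin N → ℝ≥0) := fun s i => Finset.univ.sup fun j => c i j * s j
    with hΓ
  set v : ℕ → Fin N → ℝ≥0 := fun k => Γ^[k] (fun _ => 1) with hv
  set m : ℕ → ℝ≥0 := fun k => Finset.univ.sup (v k) with hm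
  have hΓge : ∀ (s : Fin N → ℝ≥0) i j, c i j * s j ≤ Γ s i := fun s i j =>
    Finset.le_sup (f := fun j => c i j * s j) (Finset.mem_univ j)
  have hΓsup_le : ∀ (s : Fin N → ℝ≥0) i t, (∀ j, c i j * s j ≤ t) → Γ s i ≤ t :=
    fun s i t h => Finset.sup_le fun j _ => h j
  have hv0 : v 0 = fun _ => 1 := rfl
  have hvsucc : ∀ k, v (k + 1) = Γ (v k) := fun k => by
    simp only [hv, Function.iterate_succ_apply']
  have hΓmono : Monotone Γ := by
    intro s t hst i
    exact Finset.sup_mono_fun fun j _ => mul_le_mul_right (hst j) _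
  have hΓhom : ∀ (t : ℝ≥0) (s : Fin N → ℝ≥0), Γ (fun j => t * s j) = fun i => t * Γ s i := by
    intro t s
    funext i
    show (Finset.univ.sup fun j => c i j * (t * s j)) = t * Finset.univ.sup fun j => c i j * s j
    rw [mul_finset_sup_nnreal]
    exact Finset.sup_congr rfl fun j _ => by ring
  have hiterhom : ∀ (k : ℕ) (t : ℝ≥0) (s : Fin N → ℝ≥0),
      Γ^[k] (fun j => t * s j) = fun i => t * Γ^[k] s i := by
    intro k
    induction k with
    | zero => intro t s; rfl
    | succ k ih =>
        intro t s
        rw [Function.iterate_succ_apply, Function.iterate_succ_apply, hΓhom, ih]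
  have hvpos : ∀ k i, 0 < v k i := by
    intro k
    induction k with
    | zero => intro i; exact one_pos
    | succ k ih =>
        intro i
        rw [hvsucc]
        exact lt_of_lt_of_le (mul_pos (hc i i) (ih i)) (hΓge (v k) i i)
  have hvle : ∀ k i, v k i ≤ m k := fun k i => Finset.le_sup (f := v k) (Finset.mem_univ i)
  have hmle : ∀ k t, (∀ i, v k i ≤ t) → m k ≤ t := fun k t h => Finset.sup_le fun i _ => h i
  have hmex : ∀ k, ∃ i, m k = v k i := by
    intro k
    obtain ⟨i, -, hi⟩ := Finset.exists_mem_eq_sup Finset.univ Finset.univ_nonempty (v k)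
    exact ⟨i, hi⟩
  have hmpos : ∀ k, 0 < m k := fun k =>
    lt_of_lt_of_le (hvpos k (Classical.arbitrary _)) (hvle k _)
  have hm0 : m 0 = 1 := by
    show Finset.univ.sup (v 0) = 1
    rw [hv0]
    exact Finset.sup_const Finset.univ_nonempty 1
  have hiteradd : ∀ k l, v (k + l) = Γ^[k] (v l) := by
    intro k l
    show Γ^[k+l] (fun _ => 1) = _
    rw [Function.iterate_add_apply]
  have hsub : ∀ k l, m (k + l) ≤ m k * m l := by
    intro k l
    have h2 : v l ≤ fun _ => m l * 1 := fun j => by simpa using hvle l j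
    have h3 := hΓmono.iterate k h2
    rw [hiterhom k (m l)] at h3
    refine hmle _ _ fun i => ?_
    calc v (k + l) i = Γ^[k] (v l) i := by rw [hiteradd]
    _ ≤ m l * Γ^[k] (fun _ => 1) i := h3 i
    _ = m l * v k i := rfl
    _ ≤ m l * m k := mul_le_mul_right (hvle k i) _
    _ = m k * m l := mul_comm _ _
  set δ : ℝ≥0 := Finset.univ.inf' Finset.univ_nonempty
      (fun i => Finset.univ.inf' Finset.univ_nonempty fun j => c i j) with hδ
  have hδpos : 0 < δ := by
    rw [hδ, Finset.lt_inf'_iff]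
    intro i _
    rw [Finset.lt_inf'_iff]
    intro j _
    exact hc i j
  have hδle : ∀ i j, δ ≤ c i j := fun i j =>
    le_trans (Finset.inf'_le _ (Finset.mem_univ i)) (Finset.inf'_le _ (Finset.mem_univ j))
  have hF5 : ∀ l i, δ * m l ≤ v (l + 1) i := by
    intro l i
    obtain ⟨j, hj⟩ := hmex l
    rw [hvsucc]
    calc δ * m l = δ * v l j := by rw [hj]
    _ ≤ c i j * v l j := mul_le_mul_left (hδle i j) _
    _ ≤ _ := hΓge (v l) i j
  have hF6 : ∀ k l, δ * m l * m k ≤ m (k + (l + 1)) := by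
    intro k l
    have h2 : (fun _ : Fin N => δ * m l * 1) ≤ v (l + 1) := fun i => by simpa using hF5 l i
    have h3 := hΓmono.iterate k h2
    rw [hiterhom k (δ * m l)] at h3
    obtain ⟨i, hi⟩ := hmex k
    calc δ * m l * m k = δ * m l * v k i := by rw [hi]
    _ = δ * m l * Γ^[k] (fun _ => 1) i := rfl
    _ ≤ Γ^[k] (v (l + 1)) i := h3 i
    _ = v (k + (l + 1)) i := (congrFun (hiteradd k (l + 1)) i).symm
    _ ≤ m (k + (l + 1)) := hvle _ i
  have hKex : ∃ K, 0 < K ∧ m K < 1 := by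
    by_contra hK
    push_neg at hK
    have hm1 : ∀ k, (1:ℝ≥0) ≤ m k := by
      intro k
      rcases Nat.eq_zero_or_pos k with rfl | hk
      · exact hm0.ge
      · exact hK k hk
    set f : ℕ → ℝ := fun k => Real.log (m k) with hff
    have hmposR : ∀ k, (0:ℝ) < (m k : ℝ) := fun k => by exact_mod_cast hmpos k
    have hf0 : ∀ k, 0 ≤ f k := fun k => Real.log_nonneg (by exact_mod_cast hm1 k)
    have hfsub : Subadditive f := by
      intro k l
      have h1 : (m (k+l) : ℝ) ≤ (m k : ℝ) * (m l : ℝ) := by exact_mod_cast hsub k l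
      calc f (k+l) ≤ Real.log ((m k : ℝ) * (m l : ℝ)) := Real.log_le_log (hmposR _) h1
      _ = f k + f l := Real.log_mul (hmposR k).ne' (hmposR l).ne'
    set C : ℝ := Real.log δ - Real.log (m 1) with hCdef
    have hδR : (0:ℝ) < (δ:ℝ) := by exact_mod_cast hδpos
    have hC : ∀ k l, f k + f (l+1) + C ≤ f (k + (l+1)) := by
      intro k l
      have h2 : (m (l + 1) : ℝ) ≤ (m 1 : ℝ) * (m l : ℝ) := by
        have := hsub 1 l
        rw [add_comm] at this
        exact_mod_cast this
      have h3 : (δ:ℝ) * (m l:ℝ) * (m k:ℝ) ≤ ((m (k+(l+1)) : ℝ≥0) : ℝ) := by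
        exact_mod_cast hF6 k l
      have h1 : (δ:ℝ) * (m (l+1) : ℝ) * (m k : ℝ) ≤ (m 1 : ℝ) * (m (k + (l+1)) : ℝ) := by
        calc (δ:ℝ) * (m (l+1) : ℝ) * (m k : ℝ)
            ≤ (δ:ℝ) * ((m 1 : ℝ) * (m l : ℝ)) * (m k : ℝ) := by
              have hmk := (hmposR k).le
              nlinarith [mul_le_mul_of_nonneg_left h2 hδR.le]
        _ = (m 1:ℝ) * ((δ:ℝ) * (m l:ℝ) * (m k:ℝ)) := by ring
        _ ≤ (m 1:ℝ) * (m (k + (l+1)) : ℝ) := mul_le_mul_of_nonneg_left h3 (hmposR 1).le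
      have h4 := Real.log_le_log (mul_pos (mul_pos hδR (hmposR _)) (hmposR _)) h1
      rw [Real.log_mul (mul_pos hδR (hmposR _)).ne' (hmposR k).ne',
        Real.log_mul hδR.ne' (hmposR (l+1)).ne',
        Real.log_mul (hmposR 1).ne' (hmposR _).ne'] at h4
      simp only [hff, hCdef] at *
      linarith
    have hδm1 : δ ≤ m 1 := by
      have i := Classical.arbitrary (Fin N)
      calc δ ≤ c i i := hδle i i
      _ = c i i * v 0 i := (mul_one _).symm
      _ ≤ Γ (v 0) i := hΓge (v 0) i i
      _ = v 1 i := (congrFun (hvsucc 0) i).symm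
      _ ≤ m 1 := hvle 1 i
    have hCle : C ≤ 0 := sub_nonpos.2 (Real.log_le_log hδR (by exact_mod_cast hδm1))
    have hbdd : BddBelow (Set.range fun n : ℕ => f n / n) := by
      refine ⟨0, ?_⟩
      rintro x ⟨n, rfl⟩
      exact div_nonneg (hf0 n) (Nat.cast_nonneg n)
    have htend := hfsub.tendsto_lim hbdd
    set L := hfsub.lim with hLdef
    have hL0 : 0 ≤ L := ge_of_tendsto htend (Filter.Eventually.of_forall fun n =>
      div_nonneg (hf0 n) (Nat.cast_nonneg n))
    have hf00 : f 0 = 0 := by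
      simp only [hff, hm0]
      simp
    have hlow : ∀ k : ℕ, (k:ℝ) * L ≤ f k := by
      intro k
      rcases Nat.eq_zero_or_pos k with rfl | hk
      · simp [hf00]
      · have h1 := hfsub.lim_le_div hbdd (n := k) hk.ne'
        rw [le_div_iff₀ (by exact_mod_cast hk)] at h1
        linarith
    have hup : ∀ k : ℕ, f k ≤ (k:ℝ) * L - C := by
      intro k
      rcases Nat.eq_zero_or_pos k with rfl | hk
      · simp [hf00]; linarith
      · have hiter : ∀ t : ℕ, 1 ≤ t → (t:ℝ) * f k + ((t:ℝ) - 1) * C ≤ f (k * t) := by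
          intro t
          induction t with
          | zero => intro ht; omega
          | succ t ih =>
              intro _
              rcases Nat.eq_zero_or_pos t with rfl | ht'
              · simp
              · have h1 := ih ht'
                have h2 : f (k*t) + f k + C ≤ f (k*t + k) := by
                  obtain ⟨k', rfl⟩ : ∃ k', k = k' + 1 := ⟨k - 1, by omega⟩
                  exact hC ((k' + 1) * t) k'
                have h3 : k * (t+1) = k*t + k := by ring
                rw [h3]
                push_cast
                linarith
        have hklim : Tendsto (fun t : ℕ => f (k*t) / ((k*t : ℕ):ℝ)) atTop (𝓝 L) := by
          have hmul : Tendsto (fun t : ℕ => k * t) atTop atTop :=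
            tendsto_atTop_mono (fun t => Nat.le_mul_of_pos_left t hk) tendsto_id
          exact htend.comp hmul
        have hAlim : Tendsto (fun t : ℕ => (k:ℝ) * (f (k*t) / ((k*t:ℕ):ℝ))) atTop
            (𝓝 ((k:ℝ) * L)) := hklim.const_mul _
        have hBlim : Tendsto (fun t : ℕ => (((t:ℝ) - 1)/(t:ℝ)) * C) atTop (𝓝 (1 * C)) := by
          refine Tendsto.mul_const _ ?_
          have h1 : Tendsto (fun t : ℕ => 1 - 1/(t:ℝ)) atTop (𝓝 (1 - 0)) :=
            tendsto_const_nhds.sub tendsto_one_div_atTop_nhds_zero_nat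
          rw [sub_zero] at h1
          refine h1.congr' ?_
          filter_upwards [eventually_ge_atTop 1] with t ht
          have ht0 : (t:ℝ) ≠ 0 := Nat.cast_ne_zero.2 (by omega)
          field_simp
        have hfinal := hAlim.sub hBlim
        have hev : ∀ᶠ t : ℕ in atTop,
            f k ≤ (k:ℝ)*(f (k*t)/((k*t:ℕ):ℝ)) - (((t:ℝ)-1)/(t:ℝ))*C := by
          filter_upwards [eventually_ge_atTop 1] with t ht
          have htR : (1:ℝ) ≤ (t:ℝ) := by exact_mod_cast ht
          have ht0 : (0:ℝ) < (t:ℝ) := by linarith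
          have h1 := hiter t ht
          have hexp : (k:ℝ) * (f (k*t) / ((k*t:ℕ):ℝ)) = f (k*t) / (t:ℝ) := by
            have hk0 : ((k:ℕ):ℝ) ≠ 0 := by
              have : (0:ℝ) < (k:ℝ) := by exact_mod_cast hk
              linarith
            push_cast
            field_simp
          rw [hexp]
          calc f k = ((t:ℝ) * f k) / (t:ℝ) := by field_simp
          _ ≤ (f (k*t) - ((t:ℝ)-1)*C) / (t:ℝ) := by
              gcongr
              linarith
          _ = f (k*t)/(t:ℝ) - (((t:ℝ)-1)/(t:ℝ))*C := by ring
        have hle : f k ≤ (k:ℝ)*L - 1*C := ge_of_tendsto hfinal hev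
        linarith
    -- exponentiate the Fekete bounds
    set αr : ℝ := Real.exp L with hαdef
    have hα1 : (1:ℝ) ≤ αr := Real.one_le_exp hL0
    have hmlowR : ∀ k, αr ^ k ≤ (m k:ℝ) := by
      intro k
      rw [hαdef, ← Real.exp_nat_mul]
      calc Real.exp ((k:ℝ) * L) ≤ Real.exp (f k) := Real.exp_le_exp.2 (hlow k)
      _ = (m k : ℝ) := Real.exp_log (hmposR k)
    set BR : ℝ := Real.exp (-C) with hBRdef
    have hBR0 : (0:ℝ) < BR := Real.exp_pos _
    have hmupR : ∀ k, (m k:ℝ) ≤ BR * αr ^ k := by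
      intro k
      rw [hBRdef, hαdef, ← Real.exp_nat_mul, ← Real.exp_add]
      calc (m k:ℝ) = Real.exp (f k) := (Real.exp_log (hmposR k)).symm
      _ ≤ _ := Real.exp_le_exp.2 (by linarith [hup k])
    -- move to ℝ≥0∞ and take limsups of the normalized iterates
    set A : ℝ≥0∞ := ENNReal.ofReal αr with hAdef
    have hA0 : A ≠ 0 := by
      rw [hAdef]
      simp only [ne_eq, ENNReal.ofReal_eq_zero, not_le]
      linarith
    have hA1 : (1:ℝ≥0∞) ≤ A := by
      rw [hAdef, ← ENNReal.ofReal_one]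
      exact ENNReal.ofReal_le_ofReal hα1
    have hAtop : A ≠ ⊤ := ENNReal.ofReal_ne_top
    have hApow0 : ∀ k : ℕ, A ^ k ≠ 0 := fun k => pow_ne_zero k hA0
    have hApowtop : ∀ k : ℕ, A ^ k ≠ ⊤ := fun k => ENNReal.pow_ne_top hAtop
    set x : Fin N → ℕ → ℝ≥0∞ := fun i k => ((v k i : ℝ≥0) : ℝ≥0∞) / A ^ k with hxdef
    have hcoeA : ∀ k : ℕ, A ^ k = ENNReal.ofReal (αr ^ k) := fun k => by
      rw [hAdef, ENNReal.ofReal_pow (by linarith)]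
    have hmA : ∀ k, A ^ k ≤ ((m k : ℝ≥0) : ℝ≥0∞) := by
      intro k
      rw [hcoeA, ← ENNReal.ofReal_coe_nnreal]
      exact ENNReal.ofReal_le_ofReal (hmlowR k)
    set B : ℝ≥0∞ := ENNReal.ofReal BR with hBdef2
    have hBtop : B ≠ ⊤ := ENNReal.ofReal_ne_top
    have hmB : ∀ k, ((m k : ℝ≥0) : ℝ≥0∞) ≤ B * A ^ k := by
      intro k
      rw [hcoeA, hBdef2, ← ENNReal.ofReal_mul hBR0.le, ← ENNReal.ofReal_coe_nnreal]
      exact ENNReal.ofReal_le_ofReal (hmupR k)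
    have hxle : ∀ i k, x i k ≤ B := by
      intro i k
      refine ENNReal.div_le_of_le_mul ?_
      calc ((v k i : ℝ≥0):ℝ≥0∞) ≤ ((m k : ℝ≥0) : ℝ≥0∞) := by exact_mod_cast hvle k i
      _ ≤ B * A ^ k := hmB k
    set s : Fin N → ℝ≥0∞ := fun i => limsup (x i) atTop with hsdef
    have hstop : ∀ i, s i ≠ ⊤ := by
      intro i
      refine (lt_of_le_of_lt ?_ (lt_top_iff_ne_top.2 hBtop)).ne
      exact limsup_le_of_le (by isBoundedDefault) (Filter.Eventually.of_forall fun k => hxle i k)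
    have hxrec : ∀ i k, A * x i (k+1) = Finset.univ.sup fun j => ((c i j : ℝ≥0) : ℝ≥0∞) * x j k := by
      intro i k
      have hv1 : v (k+1) i = Finset.univ.sup fun j => c i j * v k j := congrFun (hvsucc k) i
      have h1 : A * x i (k+1) = ((v (k+1) i : ℝ≥0) : ℝ≥0∞) / A ^ k := by
        show A * (((v (k+1) i : ℝ≥0) : ℝ≥0∞) / A^(k+1)) = _
        rw [pow_succ, div_eq_mul_inv, div_eq_mul_inv,
          ENNReal.mul_inv (Or.inl (hApow0 k)) (Or.inl (hApowtop k))]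
        rw [show A * (((v (k+1) i : ℝ≥0) : ℝ≥0∞) * ((A^k)⁻¹ * A⁻¹))
            = (A * A⁻¹) * (((v (k+1) i : ℝ≥0) : ℝ≥0∞) * (A^k)⁻¹) by ring,
          ENNReal.mul_inv_cancel hA0 hAtop, one_mul]
      rw [h1, hv1, ENNReal.coe_finset_sup, div_eq_mul_inv, mul_comm, mul_finset_sup_ennreal]
      refine Finset.sup_congr rfl fun j _ => ?_
      rw [ENNReal.coe_mul, hxdef]
      show (A^k)⁻¹ * (((c i j : ℝ≥0):ℝ≥0∞) * ((v k j : ℝ≥0):ℝ≥0∞))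
          = ((c i j : ℝ≥0):ℝ≥0∞) * (((v k j : ℝ≥0):ℝ≥0∞) / A ^ k)
      rw [div_eq_mul_inv]
      ring
    have hkey : ∀ i, A * s i = Finset.univ.sup fun j => ((c i j : ℝ≥0) : ℝ≥0∞) * s j := by
      intro i
      calc A * s i = A * limsup (fun k => x i (k+1)) atTop := by
            show A * limsup (x i) atTop = _
            rw [← limsup_nat_add (x i) 1]
      _ = limsup (fun k => A * x i (k+1)) atTop :=
            (ENNReal.limsup_const_mul_of_ne_top hAtop).symm
      _ = limsup (fun k => Finset.univ.sup fun j => ((c i j : ℝ≥0):ℝ≥0∞) * x j k) atTop := by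
            congr 1
            funext k
            exact hxrec i k
      _ = Finset.univ.sup fun j => limsup (fun k => ((c i j : ℝ≥0):ℝ≥0∞) * x j k) atTop :=
            limsup_finset_sup _ _
      _ = Finset.univ.sup fun j => ((c i j : ℝ≥0):ℝ≥0∞) * s j :=
            Finset.sup_congr rfl fun j _ =>
              ENNReal.limsup_const_mul_of_ne_top ENNReal.coe_ne_top
    have hxsup : ∀ k, (1:ℝ≥0∞) ≤ Finset.univ.sup fun i => x i k := by
      intro k
      obtain ⟨i, hi⟩ := hmex k
      refine le_trans ?_ (Finset.le_sup (f := fun i => x i k) (Finset.mem_univ i))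
      show (1:ℝ≥0∞) ≤ ((v k i : ℝ≥0):ℝ≥0∞) / A ^ k
      rw [ENNReal.le_div_iff_mul_le (Or.inl (hApow0 k)) (Or.inl (hApowtop k)), one_mul]
      calc A^k ≤ ((m k : ℝ≥0):ℝ≥0∞) := hmA k
      _ = ((v k i : ℝ≥0):ℝ≥0∞) := by rw [hi]
    have hssup : (1:ℝ≥0∞) ≤ Finset.univ.sup s := by
      calc (1:ℝ≥0∞) ≤ limsup (fun k => Finset.univ.sup fun i => x i k) atTop :=
            le_limsup_of_frequently_le' (Filter.Frequently.of_forall hxsup)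
      _ = Finset.univ.sup fun i => limsup (x i) atTop := limsup_finset_sup _ _
      _ = Finset.univ.sup s := rfl
    set sN : Fin N → ℝ≥0 := fun i => (s i).toNNReal with hsNdef
    have hcoeS : ∀ i, ((sN i : ℝ≥0) : ℝ≥0∞) = s i := fun i => ENNReal.coe_toNNReal (hstop i)
    have hsN0 : sN ≠ 0 := by
      intro h0
      have hz : ∀ i, s i = 0 := fun i => by
        rw [← hcoeS i]
        have : sN i = 0 := congrFun h0 i
        rw [this, ENNReal.coe_zero]
      have h2 : Finset.univ.sup s ≤ 0 := Finset.sup_le fun i _ => (hz i).le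
      exact absurd (le_trans hssup h2) (by simp)
    obtain ⟨i, hi⟩ := hsg sN hsN0
    have h3 : ((sN i : ℝ≥0) : ℝ≥0∞) ≤ (((Finset.univ.sup fun j => c i j * sN j) : ℝ≥0) : ℝ≥0∞) := by
      rw [ENNReal.coe_finset_sup]
      calc ((sN i : ℝ≥0) : ℝ≥0∞) = s i := hcoeS i
      _ ≤ A * s i := le_mul_of_one_le_left zero_le hA1
      _ = Finset.univ.sup fun j => ((c i j:ℝ≥0):ℝ≥0∞) * s j := hkey i
      _ = Finset.univ.sup fun j => ((c i j * sN j : ℝ≥0) : ℝ≥0∞) :=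
            Finset.sup_congr rfl fun j _ => by rw [ENNReal.coe_mul, hcoeS j]
    have h4 : sN i ≤ Finset.univ.sup fun j => c i j * sN j := by exact_mod_cast h3
    exact absurd hi (not_lt.2 h4)
  -- construct the weights from K
  obtain ⟨K, hK0, hK1⟩ := hKex
  have hKR : (0:ℝ) < ((K:ℕ):ℝ) := by exact_mod_cast hK0
  set r : ℝ≥0 := (m K) ^ ((K:ℝ)⁻¹) with hrdef
  have hr0 : 0 < r := NNReal.rpow_pos (hmpos K)
  have hr1 : r < 1 := NNReal.rpow_lt_one hK1 (by positivity)
  have hrK : r ^ K = m K := by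
    have h1 : r ^ (K:ℕ) = r ^ ((K:ℕ):ℝ) := (NNReal.rpow_natCast r K).symm
    rw [h1, hrdef, ← NNReal.rpow_mul, inv_mul_cancel₀ hKR.ne', NNReal.rpow_one]
  have hrpow0 : ∀ k : ℕ, r ^ k ≠ 0 := fun k => (pow_pos hr0 k).ne'
  set lam : Fin N → ℝ≥0 := fun i => (Finset.range K).sup fun k => v k i / r ^ k with hlamdef
  have hlam1 : ∀ i, 1 ≤ lam i := by
    intro i
    have h1 : (1:ℝ≥0) = v 0 i / r ^ 0 := by
      rw [congrFun hv0 i, pow_zero, div_one]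
    rw [h1]
    exact Finset.le_sup (f := fun k => v k i / r ^ k) (Finset.mem_range.2 hK0)
  refine ⟨lam, r, hr0, hr1, hlam1, ?_⟩
  intro i
  refine Finset.sup_le fun j _ => ?_
  have hsplit : c i j * lam j = (Finset.range K).sup fun k => c i j * (v k j / r ^ k) :=
    mul_finset_sup_nnreal _ _ _
  rw [hsplit]
  refine Finset.sup_le fun k hk => ?_
  rw [Finset.mem_range] at hk
  have hterm : c i j * (v k j / r ^ k) ≤ v (k+1) i / r ^ k := by
    rw [div_eq_mul_inv, div_eq_mul_inv, ← mul_assoc]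
    refine mul_le_mul_left ?_ _
    calc c i j * v k j ≤ Γ (v k) i := hΓge (v k) i j
    _ = v (k+1) i := (congrFun (hvsucc k) i).symm
  refine le_trans hterm ?_
  rcases lt_or_eq_of_le (Nat.succ_le_of_lt hk) with hlt | heq
  · rw [div_le_iff₀ (pos_iff_ne_zero.2 (hrpow0 k))]
    have h5 : v (k+1) i ≤ lam i * r ^ (k+1) := by
      rw [← div_le_iff₀ (pos_iff_ne_zero.2 (hrpow0 (k+1)))]
      exact Finset.le_sup (f := fun k => v k i / r ^ k) (Finset.mem_range.2 hlt)
    calc v (k+1) i ≤ lam i * r ^ (k+1) := h5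
    _ = r * lam i * r ^ k := by ring
  · rw [div_le_iff₀ (pos_iff_ne_zero.2 (hrpow0 k))]
    calc v (k+1) i ≤ m (k+1) := hvle _ i
    _ = m K := by rw [← heq]
    _ = r ^ K := hrK.symm
    _ = r ^ (k+1) := by rw [← heq]
    _ = (r * 1) * r ^ k := by ring
    _ ≤ (r * lam i) * r ^ k := mul_le_mul_left (mul_le_mul_right (hlam1 i) r) _
    _ = r * lam i * r ^ k := rfl

end SGAux

end SGAuxSection

section SolAux

open Filter

variable {E F : Type*} [NormedAddCommGroup E] [NormedAddCommGroup F]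

lemma sol_add (G : E → F → E) (ξ : E) (u : ℕ → F) (p q : ℕ) :
    sol G ξ u (p + q) = sol G (sol G ξ u p) (fun k => u (p + k)) q := by
  induction q with
  | zero => rfl
  | succ q ih =>
      show G (sol G ξ u (p + q)) (u (p + q)) = G (sol G (sol G ξ u p) (fun k => u (p + k)) q) _
      rw [ih]

lemma bddInput_shift {u : ℕ → F} (hu : BddInput u) (p : ℕ) :
    BddInput (fun k => u (p + k)) := by
  obtain ⟨bb, hb⟩ := hu
  exact ⟨bb, by rintro x ⟨k, rfl⟩; exact hb ⟨p + k, rfl⟩⟩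

lemma supNorm_shift_le {u : ℕ → F} (hu : BddInput u) (p : ℕ) :
    supNorm (fun k => u (p + k)) ≤ supNorm u :=
  ciSup_le fun k => le_ciSup hu (p + k)

lemma nnnorm_le_supNorm {u : ℕ → F} (hu : BddInput u) (k : ℕ) :
    ‖u k‖₊ ≤ supNorm u := le_ciSup hu k

end SolAux

/-- Exponential ISS small-gain corollary, summation form. -/
theorem exp_small_gain_sum
    {N : ℕ} (hN : 0 < N)
    {E : Fin N → Type*} [∀ i, NormedAddCommGroup (E i)]
    [∀ i, NormedSpace ℝ (E i)] [∀ i, FiniteDimensional ℝ (E i)]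
    {F : Type*} [NormedAddCommGroup F] [NormedSpace ℝ F] [FiniteDimensional ℝ F]
    (G : (∀ i, E i) → F → (∀ i, E i))
    -- G globally K-bounded with linear first bound
    (w₁ : ℝ≥0) (hw₁ : 0 < w₁) (ω₂ : ℝ≥0 → ℝ≥0) (hω₂ : ClassK ω₂)
    (hbound : ∀ ξ μ, ‖G ξ μ‖₊ ≤ w₁ * ‖ξ‖₊ + ω₂ ‖μ‖₊)
    (M : ℕ) (hM : 1 ≤ M)
    (c : Fin N → Fin N → ℝ≥0) (hc : ∀ i j, 0 < c i j)
    (γu : Fin N → ℝ≥0 → ℝ≥0)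
    (hγu : ∀ i, ClassK (γu i) ∨ γu i = fun _ => 0)
    (a b : Fin N → ℝ≥0) (ha : ∀ i, 0 < a i) (hab : ∀ i, a i ≤ b i)
    (V : ∀ i, E i → ℝ≥0)
    (hV : ∀ (i : Fin N) (ξi : E i), a i * ‖ξi‖₊ ≤ V i ξi ∧ V i ξi ≤ b i * ‖ξi‖₊)
    -- (1) finite-step decrease in summation form with linear gains
    (hdec : ∀ (i : Fin N) (ξ : ∀ i, E i) (u : ℕ → F), BddInput u →
      V i (sol G ξ u M i) ≤
        (Finset.univ.sup fun j => c i j * V j (ξ j)) + γu i (supNorm u))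
    -- (2) small-gain condition
    (hsg : ∀ s : Fin N → ℝ≥0, s ≠ 0 →
      ∃ i, (Finset.univ.sup fun j => c i j * s j) < s i) :
    ExpISS G := by
  classical
  haveI : Nonempty (Fin N) := ⟨⟨0, hN⟩⟩
  obtain ⟨lam, r, hr0, hr1, hlam1, hlamr⟩ := SGAux.small_gain_weights hN c hc hsg
  have hlam0 : ∀ i, lam i ≠ 0 := fun i => (lt_of_lt_of_le one_pos (hlam1 i)).ne'
  set W : (∀ i, E i) → ℝ≥0 := fun ξ => Finset.univ.sup fun i => V i (ξ i) / lam i with hWdef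
  set a' : ℝ≥0 := Finset.univ.inf' Finset.univ_nonempty (fun i => a i / lam i) with ha'def
  have ha'0 : 0 < a' := by
    rw [ha'def, Finset.lt_inf'_iff]
    intro i _
    exact div_pos (ha i) (lt_of_lt_of_le one_pos (hlam1 i))
  set b' : ℝ≥0 := Finset.univ.sup fun i => b i / lam i with hb'def
  have hnorm : ∀ ξ : (∀ i, E i), ‖ξ‖₊ = Finset.univ.sup fun i => ‖ξ i‖₊ := fun ξ =>
    Pi.nnnorm_def ξ
  have hdivmono : ∀ (x y z : ℝ≥0), x ≤ y → x / z ≤ y / z := fun x y z h => by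
    rw [div_eq_mul_inv, div_eq_mul_inv]
    exact mul_le_mul_left h _
  have hW1 : ∀ ξ, a' * ‖ξ‖₊ ≤ W ξ := by
    intro ξ
    rw [hnorm, SGAux.mul_finset_sup_nnreal]
    refine Finset.sup_le fun i _ => ?_
    calc a' * ‖ξ i‖₊ ≤ (a i / lam i) * ‖ξ i‖₊ :=
          mul_le_mul_left (Finset.inf'_le _ (Finset.mem_univ i)) _
    _ = (a i * ‖ξ i‖₊) / lam i := by rw [div_mul_eq_mul_div]
    _ ≤ V i (ξ i) / lam i := hdivmono _ _ _ (hV i (ξ i)).1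
    _ ≤ W ξ := Finset.le_sup (f := fun i => V i (ξ i) / lam i) (Finset.mem_univ i)
  have hW2 : ∀ ξ, W ξ ≤ b' * ‖ξ‖₊ := by
    intro ξ
    refine Finset.sup_le fun i _ => ?_
    calc V i (ξ i) / lam i ≤ (b i * ‖ξ i‖₊) / lam i := hdivmono _ _ _ (hV i (ξ i)).2
    _ = (b i / lam i) * ‖ξ i‖₊ := by rw [div_mul_eq_mul_div]
    _ ≤ b' * ‖ξ‖₊ := by
        refine mul_le_mul' (Finset.le_sup (f := fun i => b i / lam i) (Finset.mem_univ i)) ?_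
        rw [hnorm]
        exact Finset.le_sup (f := fun i => ‖ξ i‖₊) (Finset.mem_univ i)
  have hγu_mono : ∀ i, Monotone (γu i) := fun i =>
    (hγu i).elim (fun h => h.2.1.monotone) (fun h => by rw [h]; exact monotone_const)
  have hγu0 : ∀ i, γu i 0 = 0 := fun i =>
    (hγu i).elim (fun h => h.2.2) (fun h => by rw [h])
  set Su : (ℕ → F) → ℝ≥0 := fun u => ∑ i, γu i (supNorm u) with hSudef
  have hdecW : ∀ ξ u, BddInput u → W (sol G ξ u M) ≤ r * W ξ + Su u := by
    intro ξ u hu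
    refine Finset.sup_le fun i _ => ?_
    have h1 := hdec i ξ u hu
    have hsplit : ((Finset.univ.sup fun j => c i j * V j (ξ j)) + γu i (supNorm u)) / lam i
        = (Finset.univ.sup fun j => c i j * V j (ξ j)) / lam i + γu i (supNorm u) / lam i := by
      rw [div_eq_mul_inv, div_eq_mul_inv, div_eq_mul_inv, add_mul]
    calc V i (sol G ξ u M i) / lam i
        ≤ ((Finset.univ.sup fun j => c i j * V j (ξ j)) + γu i (supNorm u)) / lam i :=
          hdivmono _ _ _ h1
    _ = (Finset.univ.sup fun j => c i j * V j (ξ j)) / lam i + γu i (supNorm u) / lam i := hsplit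
    _ ≤ r * W ξ + Su u := by
        refine add_le_add ?_ ?_
        · have hsup : (Finset.univ.sup fun j => c i j * V j (ξ j)) ≤ (r * lam i) * W ξ := by
            refine Finset.sup_le fun j _ => ?_
            have hcancel : lam j * (V j (ξ j) / lam j) = V j (ξ j) := by
              rw [mul_comm, div_mul_cancel₀ _ (hlam0 j)]
            calc c i j * V j (ξ j) = (c i j * lam j) * (V j (ξ j) / lam j) := by
                  rw [mul_assoc, hcancel]
            _ ≤ (c i j * lam j) * W ξ := mul_le_mul_right
                  (Finset.le_sup (f := fun j => V j (ξ j) / lam j) (Finset.mem_univ j)) _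
            _ ≤ (Finset.univ.sup fun j => c i j * lam j) * W ξ := mul_le_mul_left
                  (Finset.le_sup (f := fun j => c i j * lam j) (Finset.mem_univ j)) _
            _ ≤ (r * lam i) * W ξ := mul_le_mul_left (hlamr i) _
          calc (Finset.univ.sup fun j => c i j * V j (ξ j)) / lam i
              ≤ ((r * lam i) * W ξ) / lam i := hdivmono _ _ _ hsup
          _ = r * W ξ := by
              rw [show (r * lam i) * W ξ = (r * W ξ) * lam i by ring, mul_div_assoc,
                div_self (hlam0 i), mul_one]
        · calc γu i (supNorm u) / lam i = γu i (supNorm u) * (lam i)⁻¹ := div_eq_mul_inv _ _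
          _ ≤ γu i (supNorm u) * 1 := mul_le_mul_right (inv_le_one_of_one_le₀ (hlam1 i)) _
          _ = γu i (supNorm u) := mul_one _
          _ ≤ Su u := Finset.single_le_sum (f := fun j => γu j (supNorm u))
                (fun j _ => zero_le) (Finset.mem_univ i)
  set D : ℝ≥0 := (1 - r)⁻¹ with hDdef
  have hrD : r * D + 1 = D := by
    have h1 : (1 - r) ≠ 0 := (tsub_pos_of_lt hr1).ne'
    have h2 : (1 - r) * D = 1 := mul_inv_cancel₀ h1
    calc r * D + 1 = r * D + (1 - r) * D := by rw [h2]
    _ = (r + (1 - r)) * D := (add_mul _ _ _).symm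
    _ = 1 * D := by rw [add_tsub_cancel_of_le hr1.le]
    _ = D := one_mul D
  have hiterW : ∀ ξ u, BddInput u → ∀ q : ℕ,
      W (sol G ξ u (M * q)) ≤ r ^ q * W ξ + D * Su u := by
    intro ξ u hu q
    induction q with
    | zero =>
        show W ξ ≤ r ^ 0 * W ξ + D * Su u
        rw [pow_zero, one_mul]
        exact le_self_add
    | succ q ih =>
        have hMq : M * (q + 1) = M * q + M := by ring
        rw [hMq, sol_add]
        have hshift := bddInput_shift hu (M * q)
        have h1 := hdecW (sol G ξ u (M * q)) (fun k => u (M * q + k)) hshift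
        refine le_trans h1 ?_
        have hSumono : Su (fun k => u (M * q + k)) ≤ Su u :=
          Finset.sum_le_sum fun i _ => hγu_mono i (supNorm_shift_le hu _)
        calc r * W (sol G ξ u (M * q)) + Su (fun k => u (M * q + k))
            ≤ r * (r ^ q * W ξ + D * Su u) + Su u := add_le_add (mul_le_mul_right ih r) hSumono
        _ = r ^ (q + 1) * W ξ + (r * D + 1) * Su u := by ring
        _ = r ^ (q + 1) * W ξ + D * Su u := by rw [hrD]
  have hω₂mono : Monotone ω₂ := hω₂.2.1.monotone
  have hgrow : ∀ (ζ : ∀ i, E i) (u : ℕ → F), BddInput u → ∀ s : ℕ,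
      ‖sol G ζ u s‖₊ ≤ (1 + w₁) ^ s * (‖ζ‖₊ + (s : ℝ≥0) * ω₂ (supNorm u)) := by
    intro ζ u hu s
    induction s with
    | zero =>
        simp only [Nat.cast_zero, zero_mul, add_zero, pow_zero, one_mul]
        exact le_rfl
    | succ s ih =>
        have h2 : ω₂ ‖u s‖₊ ≤ ω₂ (supNorm u) := hω₂mono (nnnorm_le_supNorm hu s)
        calc ‖sol G ζ u (s+1)‖₊ = ‖G (sol G ζ u s) (u s)‖₊ := rfl
        _ ≤ w₁ * ‖sol G ζ u s‖₊ + ω₂ ‖u s‖₊ := hbound _ _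
        _ ≤ w₁ * ((1 + w₁) ^ s * (‖ζ‖₊ + (s : ℝ≥0) * ω₂ (supNorm u))) + ω₂ (supNorm u) :=
              add_le_add (mul_le_mul_right ih w₁) h2
        _ ≤ (1 + w₁) * ((1 + w₁) ^ s * (‖ζ‖₊ + (s : ℝ≥0) * ω₂ (supNorm u)))
              + (1 + w₁) ^ (s + 1) * ω₂ (supNorm u) := by
              refine add_le_add (mul_le_mul_left le_add_self _) ?_
              exact le_mul_of_one_le_left zero_le (one_le_pow_of_one_le' le_self_add _)
        _ = (1 + w₁) ^ (s + 1) * (‖ζ‖₊ + ((s : ℝ≥0) + 1) * ω₂ (supNorm u)) := by ring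
        _ = (1 + w₁) ^ (s + 1) * (‖ζ‖₊ + ((s + 1 : ℕ) : ℝ≥0) * ω₂ (supNorm u)) := by
              rw [Nat.cast_add, Nat.cast_one]
  set P : ℝ≥0 := (1 + w₁) ^ M with hPdef
  have hP1 : (1:ℝ≥0) ≤ P := one_le_pow_of_one_le' le_self_add M
  set κ : ℝ≥0 := r ^ ((M : ℝ)⁻¹) with hκdef
  have hMR : (0:ℝ) < (M : ℝ) := by exact_mod_cast hM
  have hκ0 : 0 < κ := NNReal.rpow_pos hr0
  have hκ1 : κ < 1 := NNReal.rpow_lt_one hr1 (by positivity)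
  have hκM : κ ^ M = r := by
    rw [hκdef, ← NNReal.rpow_natCast (r ^ ((M : ℝ)⁻¹)) M, ← NNReal.rpow_mul,
      inv_mul_cancel₀ hMR.ne', NNReal.rpow_one]
  set C0 : ℝ≥0 := P * a'⁻¹ * b' * r⁻¹ with hC0def
  refine ⟨max 1 C0, κ,
    fun t => (P * a'⁻¹ * D) * (∑ i, γu i t) + ((M : ℝ≥0) * P + 1) * ω₂ t,
    le_max_left _ _, hκ1, ⟨?_, ?_, ?_⟩, ?_⟩
  · -- continuity
    have hc1 : Continuous fun t => ∑ i, γu i t := by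
      refine continuous_finset_sum _ fun i _ => ?_
      exact (hγu i).elim (fun h => h.1) (fun h => by rw [h]; exact continuous_const)
    exact ((continuous_const.mul hc1).add (continuous_const.mul hω₂.1))
  · -- strict mono
    have h1 : Monotone fun t => (P * a'⁻¹ * D) * ∑ i, γu i t := fun x y h =>
      mul_le_mul_right (Finset.sum_le_sum fun i _ => hγu_mono i h) _
    have h2 : StrictMono fun t => ((M : ℝ≥0) * P + 1) * ω₂ t := by
      intro x y h
      have := hω₂.2.1 h
      exact mul_lt_mul_of_pos_left this (by positivity)
    exact h1.add_strictMono h2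
  · simp [hγu0, hω₂.2.2]
  · intro ξ u hu k
    obtain ⟨q, s, hsM, rfl⟩ : ∃ q s, s < M ∧ k = M * q + s :=
      ⟨k / M, k % M, Nat.mod_lt _ (by omega), (Nat.div_add_mod k M).symm⟩
    rw [sol_add]
    have hshift := bddInput_shift hu (M * q)
    have h1 := hgrow (sol G ξ u (M * q)) _ hshift s
    have hω' : ω₂ (supNorm fun k => u (M * q + k)) ≤ ω₂ (supNorm u) :=
      hω₂mono (supNorm_shift_le hu _)
    have hpowP : (1 + w₁) ^ s ≤ P := pow_le_pow_right₀ le_self_add hsM.le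
    have hsMcast : (s : ℝ≥0) ≤ (M : ℝ≥0) := by exact_mod_cast hsM.le
    have hWMq := hiterW ξ u hu q
    have hxMq : ‖sol G ξ u (M * q)‖₊ ≤ a'⁻¹ * (r ^ q * W ξ + D * Su u) := by
      have h3 : a' * ‖sol G ξ u (M * q)‖₊ ≤ r ^ q * W ξ + D * Su u :=
        le_trans (hW1 _) hWMq
      calc ‖sol G ξ u (M * q)‖₊ = a'⁻¹ * (a' * ‖sol G ξ u (M * q)‖₊) := by
            rw [← mul_assoc, inv_mul_cancel₀ ha'0.ne', one_mul]
      _ ≤ a'⁻¹ * (r ^ q * W ξ + D * Su u) := mul_le_mul_right h3 _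
    have hrq : r ^ q ≤ r⁻¹ * κ ^ (M * q + s) := by
      have hκs : r ≤ κ ^ s := by
        calc r = κ ^ M := hκM.symm
        _ ≤ κ ^ s := pow_le_pow_of_le_one zero_le hκ1.le hsM.le
      have h4 : r ^ (q + 1) ≤ κ ^ (M * q + s) := by
        calc r ^ (q + 1) = r ^ q * r := pow_succ r q
        _ ≤ r ^ q * κ ^ s := mul_le_mul_right hκs _
        _ = (κ ^ M) ^ q * κ ^ s := by rw [hκM]
        _ = κ ^ (M * q + s) := by rw [← pow_mul, ← pow_add]
      calc r ^ q = r⁻¹ * r ^ (q + 1) := by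
            rw [pow_succ, ← mul_assoc, mul_comm r⁻¹ (r ^ q), mul_assoc,
              inv_mul_cancel₀ hr0.ne', mul_one]
      _ ≤ r⁻¹ * κ ^ (M * q + s) := mul_le_mul_right h4 _
    calc ‖sol G (sol G ξ u (M * q)) (fun k => u (M * q + k)) s‖₊
        ≤ (1 + w₁) ^ s * (‖sol G ξ u (M * q)‖₊
            + (s : ℝ≥0) * ω₂ (supNorm fun k => u (M * q + k))) := h1
    _ ≤ P * (‖sol G ξ u (M * q)‖₊ + (M : ℝ≥0) * ω₂ (supNorm u)) := by
        refine mul_le_mul' hpowP (add_le_add le_rfl (mul_le_mul' hsMcast hω'))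
    _ ≤ P * (a'⁻¹ * (r ^ q * W ξ + D * Su u) + (M : ℝ≥0) * ω₂ (supNorm u)) := by
        exact mul_le_mul_right (add_le_add hxMq le_rfl) _
    _ ≤ P * (a'⁻¹ * (r ^ q * (b' * ‖ξ‖₊) + D * Su u) + (M : ℝ≥0) * ω₂ (supNorm u)) := by
        exact mul_le_mul_right (add_le_add (mul_le_mul_right
          (add_le_add (mul_le_mul_right (hW2 ξ) _) le_rfl) _) le_rfl) _
    _ = (P * a'⁻¹ * b') * r ^ q * ‖ξ‖₊
          + ((P * a'⁻¹ * D) * Su u + ((M : ℝ≥0) * P) * ω₂ (supNorm u)) := by ring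
    _ ≤ (P * a'⁻¹ * b') * (r⁻¹ * κ ^ (M * q + s)) * ‖ξ‖₊
          + ((P * a'⁻¹ * D) * Su u + ((M : ℝ≥0) * P + 1) * ω₂ (supNorm u)) := by
        refine add_le_add (mul_le_mul_left (mul_le_mul_right hrq _) _)
          (add_le_add le_rfl (mul_le_mul_left (le_add_right le_rfl) _))
    _ = C0 * κ ^ (M * q + s) * ‖ξ‖₊
          + ((P * a'⁻¹ * D) * Su u + ((M : ℝ≥0) * P + 1) * ω₂ (supNorm u)) := by
        rw [hC0def]; ring_nf
    _ ≤ max 1 C0 * κ ^ (M * q + s) * ‖ξ‖₊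
          + ((P * a'⁻¹ * D) * (∑ i, γu i (supNorm u))
              + ((M : ℝ≥0) * P + 1) * ω₂ (supNorm u)) := by
        exact add_le_add (mul_le_mul_left (mul_le_mul_left (le_max_right 1 C0) _) _) le_rfl
end

section
/- Suppose G : ℝⁿ × ℝᵐ → ℝⁿ is globally K-bounded. Then for every λ > 1 there exist a homeomorphism T : ℝⁿ → ℝⁿ with T(0) = 0 and a class-K function ω̃₂ such that the transformed map G̃(z,μ) := T(G(T⁻¹(z),μ)) satisfies ‖G̃(z,μ)‖ ≤ λ‖z‖ + ω̃₂(‖μ‖) for all z ∈ ℝⁿ and μ ∈ ℝᵐ; that is, after a change of coordinates the system is globally K-bounded with a linear first bound. -/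
open scoped NNReal

variable {E F : Type*} [NormedAddCommGroup E] [NormedAddCommGroup F]

open Filter in
private lemma oi_add_apply (e : ℝ≥0 ≃o ℝ≥0) (a b : ℤ) (x : ℝ≥0) :
    (e ^ (a + b)) x = (e ^ a) ((e ^ b) x) := by
  rw [zpow_add]; rfl

private lemma oi_neg_apply (e : ℝ≥0 ≃o ℝ≥0) (n : ℤ) (x : ℝ≥0) :
    (e ^ (-n)) ((e ^ n) x) = x := by
  rw [← oi_add_apply, neg_add_cancel]; rfl

open Filter in
lemma exists_phi (ω : ℝ≥0 → ℝ≥0) (hcont : Continuous ω) (hmono : StrictMono ω)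
    (hsurj : Function.Surjective ω) (h0 : ω 0 = 0) (hgt : ∀ s, 0 < s → s < ω s)
    (lam : ℝ≥0) (hlam : 1 < lam) :
    ∃ φ : ℝ≥0 ≃o ℝ≥0, ∀ s, φ (ω s) = lam * φ s := by
  set e : ℝ≥0 ≃o ℝ≥0 := StrictMono.orderIsoOfSurjective ω hmono hsurj with he_def
  have he : ∀ x, e x = ω x := fun x => rfl
  set a : ℤ → ℝ≥0 := fun n => (e ^ n) 1 with ha_def
  have hsucc : ∀ (n : ℤ) (x : ℝ≥0), (e ^ (n + 1)) x = ω ((e ^ n) x) := by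
    intro n x
    rw [add_comm, oi_add_apply, zpow_one, he]
  have hapos : ∀ n, 0 < a n := by
    intro n
    have h := (e ^ n).strictMono (zero_lt_one (α := ℝ≥0))
    have h0' : (e ^ n) 0 = 0 := by simpa using map_bot (e ^ n)
    rwa [h0'] at h
  have haS : StrictMono a := by
    apply strictMono_int_of_lt_succ
    intro n
    have : a (n + 1) = ω (a n) := hsucc n 1
    rw [this]
    exact hgt _ (hapos n)
  have ha0 : a 0 = 1 := rfl
  -- unbounded above
  have hup : ∀ r : ℝ≥0, ∃ n : ℤ, r < a n := by
    intro r
    by_contra h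
    push_neg at h
    set b : ℕ → ℝ≥0 := fun m => a m with hb_def
    have hbmono : Monotone b := fun i j hij => haS.monotone (by exact_mod_cast hij)
    have hbdd : BddAbove (Set.range b) := ⟨r, by rintro _ ⟨m, rfl⟩; exact h _⟩
    set L : ℝ≥0 := ⨆ m, b m with hL_def
    have h1 : Tendsto b atTop (nhds L) := tendsto_atTop_ciSup hbmono hbdd
    have h2 : Tendsto (fun m => b (m + 1)) atTop (nhds L) :=
      (Filter.tendsto_add_atTop_iff_nat 1).mpr h1
    have h3 : Tendsto (fun m => ω (b m)) atTop (nhds (ω L)) :=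
      Filter.Tendsto.comp hcont.continuousAt h1
    have h4 : (fun m => b (m + 1)) = fun m => ω (b m) := by
      funext m
      exact hsucc m 1
    rw [h4] at h2
    have hLω : ω L = L := tendsto_nhds_unique h3 h2
    have hL1 : 1 ≤ L := ha0 ▸ le_ciSup hbdd 0
    exact (hgt L (lt_of_lt_of_le zero_lt_one hL1)).ne' hLω
  -- goes to zero below
  have hdown : ∀ s : ℝ≥0, 0 < s → ∃ n : ℤ, a n ≤ s := by
    intro s hs
    set b : ℕ → ℝ≥0 := fun m => a (-(m : ℤ)) with hb_def
    have hbanti : Antitone b := fun i j hij => haS.monotone (by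
      simp only [neg_le_neg_iff]; exact_mod_cast hij)
    have hbdd : BddBelow (Set.range b) := OrderBot.bddBelow _
    set L : ℝ≥0 := ⨅ m, b m with hL_def
    have h1 : Tendsto b atTop (nhds L) := tendsto_atTop_ciInf hbanti hbdd
    have h2 : Tendsto (fun m => b (m + 1)) atTop (nhds L) :=
      (Filter.tendsto_add_atTop_iff_nat 1).mpr h1
    have h3 : Tendsto (fun m => ω (b (m + 1))) atTop (nhds (ω L)) :=
      Filter.Tendsto.comp hcont.continuousAt h2
    have h4 : (fun m => ω (b (m + 1))) = fun m => b m := by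
      funext m
      have key : ω (a (-(m : ℤ) - 1)) = a (-(m : ℤ)) := by
        have h5 := hsucc (-(m : ℤ) - 1) 1
        rw [sub_add_cancel] at h5
        exact h5.symm
      show ω (a (-((m + 1 : ℕ) : ℤ))) = a (-(m : ℤ))
      rw [show (-((m + 1 : ℕ) : ℤ)) = -(m : ℤ) - 1 by push_cast; ring]
      exact key
    rw [h4] at h3
    have hLω : ω L = L := tendsto_nhds_unique h3 h1
    have hL0 : L = 0 := by
      by_contra hL
      exact (hgt L (pos_iff_ne_zero.mpr hL)).ne hLω.symm
    by_contra h
    push_neg at h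
    have : s ≤ L := le_ciInf fun m => (h _).le
    rw [hL0] at this
    exact absurd (le_antisymm this (zero_le : 0 ≤ s)) hs.ne'
  -- existence of the floor index
  have hNex : ∀ s : ℝ≥0, 0 < s → ∃ n : ℤ, a n ≤ s ∧ s < a (n + 1) := by
    intro s hs
    obtain ⟨ub, hub⟩ := hup s
    obtain ⟨n, hn, hmax⟩ := Int.exists_greatest_of_bdd (P := fun z => a z ≤ s)
      ⟨ub, fun z hz => by
        by_contra hc
        push_neg at hc
        exact absurd (hz.trans_lt hub) (not_lt.mpr (haS.monotone hc.le))⟩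
      (hdown s hs)
    refine ⟨n, hn, ?_⟩
    by_contra hc
    push_neg at hc
    exact absurd (hmax _ hc) (by omega)
  have hNuniq : ∀ (s : ℝ≥0) (n m : ℤ), a n ≤ s → s < a (n + 1) → a m ≤ s → s < a (m + 1) →
      n = m := by
    intro s n m h1 h2 h3 h4
    by_contra hne
    rcases lt_or_gt_of_ne hne with h | h
    · exact absurd (haS.monotone (by omega : n + 1 ≤ m)) (not_le.mpr (h3.trans_lt h2))
    · exact absurd (haS.monotone (by omega : m + 1 ≤ n)) (not_le.mpr (h1.trans_lt h4))
  classical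
  set N : ℝ≥0 → ℤ := fun s => if h : 0 < s then (hNex s h).choose else 0 with hN_def
  have hNspec : ∀ (s : ℝ≥0) (h : 0 < s), a (N s) ≤ s ∧ s < a (N s + 1) := by
    intro s h
    simp only [hN_def, dif_pos h]
    exact (hNex s h).choose_spec
  -- the germ ψ on [1, ω 1)
  have hω1 : 1 < ω 1 := hgt 1 one_pos
  set c : ℝ≥0 := (lam - 1) / (ω 1 - 1) with hc_def
  have hω1ne : ω 1 - 1 ≠ 0 := (tsub_pos_of_lt hω1).ne'
  have hlamne : lam - 1 ≠ 0 := (tsub_pos_of_lt hlam).ne'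
  have hc : 0 < c := div_pos (tsub_pos_of_lt hlam) (tsub_pos_of_lt hω1)
  set ψ : ℝ≥0 → ℝ≥0 := fun t => 1 + c * (t - 1) with hψ_def
  have hψ1 : ψ 1 = 1 := by simp [hψ_def]
  have hψω1 : ψ (ω 1) = lam := by
    simp only [hψ_def]
    rw [hc_def, div_mul_cancel₀ _ hω1ne, add_comm, tsub_add_cancel_of_le hlam.le]
  have hψmono : ∀ u v : ℝ≥0, 1 ≤ u → u < v → ψ u < ψ v := by
    intro u v hu huv
    have : u - 1 < v - 1 := by
      rw [← NNReal.coe_lt_coe, NNReal.coe_sub hu, NNReal.coe_sub (hu.trans huv.le)]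
      have := NNReal.coe_lt_coe.mpr huv
      linarith
    exact add_lt_add_right (mul_lt_mul_of_pos_left this hc) 1
  have hψge1 : ∀ t, 1 ≤ ψ t := fun t => le_self_add
  have hψlt : ∀ t, 1 ≤ t → t < ω 1 → ψ t < lam := fun t h1 h2 => hψω1 ▸ hψmono t _ h1 h2
  have hψsurj : ∀ r : ℝ≥0, 1 ≤ r → r < lam → ∃ t, 1 ≤ t ∧ t < ω 1 ∧ ψ t = r := by
    intro r h1 h2
    refine ⟨1 + (r - 1) / c, le_self_add, ?_, ?_⟩
    · rw [← lt_tsub_iff_left, div_lt_iff₀ hc]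
      have hcc : (ω 1 - 1) * c = lam - 1 := by
        rw [hc_def, mul_comm, div_mul_cancel₀ _ hω1ne]
      rw [hcc]
      rw [← NNReal.coe_lt_coe, NNReal.coe_sub h1, NNReal.coe_sub hlam.le]
      have := NNReal.coe_lt_coe.mpr h2
      linarith
    · simp only [hψ_def]
      rw [add_tsub_cancel_left, mul_div_cancel₀ _ hc.ne', add_comm, tsub_add_cancel_of_le h1]
  -- the function φ
  set φ : ℝ≥0 → ℝ≥0 := fun s => if 0 < s then lam ^ (N s) * ψ ((e ^ (-(N s))) s) else 0
    with hφ_def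
  have hφ0 : φ 0 = 0 := by simp [hφ_def]
  have hlampos : (0 : ℝ≥0) < lam := lt_trans zero_lt_one hlam
  -- key value formula
  have key : ∀ (n : ℤ) (t : ℝ≥0), 1 ≤ t → t < ω 1 → φ ((e ^ n) t) = lam ^ n * ψ t := by
    intro n t h1 h2
    have htpos : (0 : ℝ≥0) < t := lt_of_lt_of_le zero_lt_one h1
    have hspos : 0 < (e ^ n) t := by
      have h := (e ^ n).strictMono htpos
      have h0' : (e ^ n) 0 = 0 := by simpa using map_bot (e ^ n)
      rwa [h0'] at h
    have hb1 : a n ≤ (e ^ n) t := (e ^ n).monotone h1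
    have hb2 : (e ^ n) t < a (n + 1) := by
      have : (e ^ (n + 1)) 1 = (e ^ n) (ω 1) := by
        rw [oi_add_apply, zpow_one, he]
      show (e ^ n) t < (e ^ (n + 1)) 1
      rw [this]
      exact (e ^ n).strictMono h2
    have hN : N ((e ^ n) t) = n :=
      hNuniq _ _ _ (hNspec _ hspos).1 (hNspec _ hspos).2 hb1 hb2
    simp only [hφ_def, if_pos hspos, hN, oi_neg_apply]
  -- decomposition
  have decomp : ∀ s : ℝ≥0, 0 < s → ∃ (n : ℤ) (t : ℝ≥0), 1 ≤ t ∧ t < ω 1 ∧ s = (e ^ n) t := by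
    intro s hs
    obtain ⟨h1, h2⟩ := hNspec s hs
    refine ⟨N s, (e ^ (-(N s))) s, ?_, ?_, ?_⟩
    · have := (e ^ (-(N s))).monotone h1
      rwa [show (e ^ (-(N s))) (a (N s)) = 1 from oi_neg_apply e (N s) 1] at this
    · have h3 := (e ^ (-(N s))).strictMono h2
      have h4 : (e ^ (-(N s))) (a (N s + 1)) = ω 1 := by
        show (e ^ (-(N s))) ((e ^ (N s + 1)) 1) = ω 1
        rw [← oi_add_apply, show -(N s) + (N s + 1) = 1 by ring, zpow_one, he]
      rwa [h4] at h3
    · rw [← oi_add_apply, show N s + -(N s) = 0 by ring, zpow_zero]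
      rfl
  -- positivity
  have hφpos : ∀ s : ℝ≥0, 0 < s → 0 < φ s := by
    intro s hs
    obtain ⟨n, t, h1, h2, rfl⟩ := decomp s hs
    rw [key n t h1 h2]
    exact mul_pos (zpow_pos hlampos n) (lt_of_lt_of_le zero_lt_one (hψge1 t))
  -- strict monotonicity
  have hφmono : StrictMono φ := by
    intro s t hst
    rcases eq_or_lt_of_le (zero_le : 0 ≤ s) with rfl | hs
    · rw [hφ0]; exact hφpos t hst
    obtain ⟨n, u, hu1, hu2, rfl⟩ := decomp s hs
    obtain ⟨m, v, hv1, hv2, rfl⟩ := decomp t (hs.trans hst)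
    rw [key n u hu1 hu2, key m v hv1 hv2]
    have hsn1 : a n ≤ (e ^ n) u := (e ^ n).monotone hu1
    have htm2 : (e ^ m) v < a (m + 1) := by
      have h4 : (e ^ m) (ω 1) = a (m + 1) := by
        show _ = (e ^ (m + 1)) 1
        rw [oi_add_apply, zpow_one, he]
      rw [← h4]
      exact (e ^ m).strictMono hv2
    have hnm : n ≤ m := by
      by_contra hc
      push_neg at hc
      have : a (m + 1) ≤ a n := haS.monotone (by omega)
      exact absurd ((htm2.trans_le this).trans_le hsn1) (not_lt.mpr hst.le)
    rcases eq_or_lt_of_le hnm with rfl | hlt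
    · have huv : u < v := (e ^ n).strictMono.lt_iff_lt.mp hst
      exact mul_lt_mul_of_pos_left (hψmono u v hu1 huv) (zpow_pos hlampos n)
    · calc lam ^ n * ψ u < lam ^ n * lam :=
            mul_lt_mul_of_pos_left (hψlt u hu1 hu2) (zpow_pos hlampos n)
        _ = lam ^ (n + 1) := (zpow_add_one₀ hlampos.ne' n).symm
        _ ≤ lam ^ m := zpow_le_zpow_right₀ hlam.le (by omega)
        _ ≤ lam ^ m * ψ v := le_mul_of_one_le_right zero_le (hψge1 v)
  -- surjectivity
  have hφsurj : Function.Surjective φ := by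
    intro r
    rcases eq_or_lt_of_le (zero_le : 0 ≤ r) with rfl | hr
    · exact ⟨0, hφ0⟩
    obtain ⟨m, hm1, hm2⟩ := exists_mem_Ico_zpow (x := r) (y := lam) hr hlam
    have hlmne : (lam : ℝ≥0) ^ m ≠ 0 := (zpow_pos hlampos m).ne'
    have hq1 : 1 ≤ r / lam ^ m := by
      rw [one_le_div (zpow_pos hlampos m)]
      exact hm1
    have hq2 : r / lam ^ m < lam := by
      rw [div_lt_iff₀ (zpow_pos hlampos m)]
      rwa [zpow_add_one₀ hlampos.ne', mul_comm] at hm2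
    obtain ⟨t, ht1, ht2, hψt⟩ := hψsurj _ hq1 hq2
    refine ⟨(e ^ m) t, ?_⟩
    rw [key m t ht1 ht2, hψt, mul_comm, div_mul_cancel₀ _ hlmne]
  -- functional equation
  have hφeq : ∀ s, φ (ω s) = lam * φ s := by
    intro s
    rcases eq_or_lt_of_le (zero_le : 0 ≤ s) with rfl | hs
    · rw [h0, hφ0, mul_zero]
    obtain ⟨n, t, h1, h2, rfl⟩ := decomp s hs
    have : ω ((e ^ n) t) = (e ^ (n + 1)) t := (hsucc n t).symm
    rw [this, key (n + 1) t h1 h2, key n t h1 h2, zpow_add_one₀ hlampos.ne']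
    ring
  exact ⟨StrictMono.orderIsoOfSurjective φ hφmono hφsurj, hφeq⟩

section Radial
variable {E : Type*} [NormedAddCommGroup E] [NormedSpace ℝ E]

noncomputable def rad (φ : ℝ≥0 ≃o ℝ≥0) (x : E) : E := ((φ ‖x‖₊ : ℝ) / ‖x‖) • x

lemma map_zero_oi (φ : ℝ≥0 ≃o ℝ≥0) : φ 0 = 0 := by simpa using map_bot φ

lemma nnnorm_rad (φ : ℝ≥0 ≃o ℝ≥0) (x : E) : ‖rad φ x‖₊ = φ ‖x‖₊ := by
  by_cases hx : x = 0
  · subst hx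
    simp only [rad, smul_zero, nnnorm_zero]
    exact (map_zero_oi φ).symm
  · have hnx : (0 : ℝ) < ‖x‖ := norm_pos_iff.mpr hx
    apply NNReal.coe_injective
    rw [coe_nnnorm, rad, norm_smul, Real.norm_of_nonneg (by positivity)]
    rw [div_mul_cancel₀ _ hnx.ne']

lemma rad_symm_rad (φ : ℝ≥0 ≃o ℝ≥0) (x : E) : rad φ.symm (rad φ x) = x := by
  by_cases hx : x = 0
  · subst hx; simp [rad]
  · have hnx : (0 : ℝ) < ‖x‖ := norm_pos_iff.mpr hx
    have hnx' : ‖x‖₊ ≠ 0 := by simpa [← NNReal.coe_eq_zero, coe_nnnorm] using hnx.ne'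
    have hφn : φ ‖x‖₊ ≠ 0 := by
      intro h
      exact hnx' (φ.injective (h.trans (map_zero_oi φ).symm))
    have hnr : ‖rad φ x‖ = (φ ‖x‖₊ : ℝ) := by
      rw [← coe_nnnorm, nnnorm_rad]
    rw [rad, nnnorm_rad, hnr, φ.symm_apply_apply, rad, smul_smul]
    have hc : (‖x‖₊ : ℝ) / (φ ‖x‖₊ : ℝ) * ((φ ‖x‖₊ : ℝ) / ‖x‖) = 1 := by
      rw [coe_nnnorm]
      field_simp
    rw [hc, one_smul]

lemma continuous_rad (φ : ℝ≥0 ≃o ℝ≥0) : Continuous (rad φ : E → E) := by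
  rw [continuous_iff_continuousAt]
  intro x
  by_cases hx : x = 0
  · subst hx
    have h0 : rad φ (0 : E) = 0 := by simp [rad]
    rw [ContinuousAt, h0]
    rw [tendsto_zero_iff_norm_tendsto_zero]
    have hfun : (fun y : E => ‖rad φ y‖) = fun y : E => ((φ ‖y‖₊ : ℝ)) := by
      funext y
      rw [← coe_nnnorm, nnnorm_rad]
    rw [hfun]
    have hcont : Continuous fun y : E => ((φ ‖y‖₊ : ℝ)) :=
      NNReal.continuous_coe.comp (φ.continuous.comp continuous_nnnorm)
    have := hcont.continuousAt (x := (0 : E))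
    rw [ContinuousAt] at this
    simpa [map_zero_oi φ] using this
  · have hnx : (0 : ℝ) < ‖x‖ := norm_pos_iff.mpr hx
    have h1 : ContinuousAt (fun y : E => ((φ ‖y‖₊ : ℝ) / ‖y‖)) x := by
      apply ContinuousAt.div
      · exact (NNReal.continuous_coe.comp (φ.continuous.comp continuous_nnnorm)).continuousAt
      · exact continuous_norm.continuousAt
      · exact hnx.ne'
    exact h1.smul continuousAt_id

noncomputable def radHomeo (φ : ℝ≥0 ≃o ℝ≥0) : E ≃ₜ E where
  toFun := rad φ
  invFun := rad φ.symm
  left_inv := rad_symm_rad φ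
  right_inv := fun x => by
    have := rad_symm_rad φ.symm x
    simpa using this
  continuous_toFun := continuous_rad φ
  continuous_invFun := continuous_rad φ.symm

end Radial

/-- A globally K-bounded map can be transformed, by a change of
coordinates (a homeomorphism fixing the origin), into a map that is globally
K-bounded with a linear first bound of slope λ, for any λ > 1. -/
theorem change_of_coordinates_linear_bound
    {E F : Type*} [NormedAddCommGroup E] [NormedSpace ℝ E] [FiniteDimensional ℝ E]
    [NormedAddCommGroup F] [NormedSpace ℝ F] [FiniteDimensional ℝ F]
    (G : E → F → E) (hG : GloballyKBounded G)
    (lam : ℝ≥0) (hlam : 1 < lam) :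
    ∃ T : E ≃ₜ E, T 0 = 0 ∧
      ∃ ω₂' : ℝ≥0 → ℝ≥0, ClassK ω₂' ∧
        ∀ (z : E) (μ : F), ‖T (G (T.symm z) μ)‖₊ ≤ lam * ‖z‖₊ + ω₂' ‖μ‖₊ := by
  obtain ⟨ω₁, ω₂, ⟨hc1, hm1, h01⟩, ⟨hc2, hm2, h02⟩, hb⟩ := hG
  set ω : ℝ≥0 → ℝ≥0 := fun s => 2 * ω₁ s + s with hω_def
  have hcont : Continuous ω := (continuous_const.mul hc1).add continuous_id
  have hmono : StrictMono ω := fun u v h =>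
    add_lt_add_of_le_of_lt (mul_le_mul_right (hm1 h).le 2) h
  have h0 : ω 0 = 0 := by simp [hω_def, h01]
  have hgt : ∀ s, 0 < s → s < ω s := by
    intro s hs
    have h1 : 0 < ω₁ s := h01 ▸ hm1 hs
    have h2 : 0 < 2 * ω₁ s := by positivity
    exact lt_add_of_pos_left s h2
  have hsurj : Function.Surjective ω := by
    intro r
    have hr : r ≤ ω r := by
      rcases eq_or_lt_of_le (zero_le : 0 ≤ r) with rfl | h
      · exact h0.ge
      · exact (hgt r h).le
    have hmem : r ∈ Set.Icc (ω 0) (ω r) := ⟨by rw [h0]; exact (zero_le : 0 ≤ r), hr⟩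
    obtain ⟨s, _, hs⟩ := intermediate_value_Icc (zero_le : 0 ≤ r) hcont.continuousOn hmem
    exact ⟨s, hs⟩
  obtain ⟨φ, hφeq⟩ := exists_phi ω hcont hmono hsurj h0 hgt lam hlam
  have hφ0 : φ 0 = 0 := map_zero_oi φ
  refine ⟨radHomeo φ, ?_, fun s => φ (2 * ω₂ s), ⟨?_, ?_, ?_⟩, ?_⟩
  · show rad φ (0 : E) = 0
    simp [rad]
  · exact φ.continuous.comp (continuous_const.mul hc2)
  · intro u v h
    exact φ.strictMono (mul_lt_mul_of_pos_left (hm2 h) two_pos)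
  · simp only [h02, mul_zero, hφ0]
  · intro z μ
    set X : ℝ≥0 := φ.symm ‖z‖₊ with hX
    set Y : ℝ≥0 := ‖μ‖₊ with hY
    have hTz : ‖(radHomeo φ).symm z‖₊ = X := nnnorm_rad φ.symm z
    have hT : ‖(radHomeo φ) (G ((radHomeo φ).symm z) μ)‖₊
        = φ ‖G ((radHomeo φ).symm z) μ‖₊ := nnnorm_rad φ _
    rw [hT]
    have h1 : φ ‖G ((radHomeo φ).symm z) μ‖₊ ≤ φ (ω₁ X + ω₂ Y) := by
      apply φ.monotone
      have := hb ((radHomeo φ).symm z) μ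
      rwa [hTz] at this
    have h2 : ω₁ X + ω₂ Y ≤ max (2 * ω₁ X) (2 * ω₂ Y) := by
      rcases le_total (ω₁ X) (ω₂ Y) with h | h
      · exact le_max_of_le_right (by rw [two_mul]; exact add_le_add_left h _)
      · exact le_max_of_le_left (by rw [two_mul]; exact add_le_add_right h _)
    have h3 : φ (ω₁ X + ω₂ Y) ≤ max (φ (2 * ω₁ X)) (φ (2 * ω₂ Y)) :=
      le_of_le_of_eq (φ.monotone h2) φ.monotone.map_max
    have h4 : φ (2 * ω₁ X) ≤ lam * ‖z‖₊ := by
      calc φ (2 * ω₁ X) ≤ φ (ω X) := φ.monotone (le_add_right le_rfl)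
        _ = lam * φ (φ.symm ‖z‖₊) := hφeq X
        _ = lam * ‖z‖₊ := by rw [φ.apply_symm_apply]
    exact h1.trans (h3.trans (max_le (h4.trans (self_le_add_right _ _))
      (self_le_add_left _ _)))
end
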